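/- arXiv:2309.12480 — 7 statements merged into one kernel-verified Lean document; each statement's English description precedes it below -/
import Mathlib

section
/- Let L ∈ ℝ^{n×n} be the Laplacian matrix of a strongly connected weighted digraph, and let v ∈ ℝⁿ be a nonzero left eigenvector of L associated with the eigenvalue 0 (i.e., vᵀL = 0), normalized so that vᵀ1ₙ = 1. Then every entry of v is strictly positive and, setting V := diag(v), the matrix Q := V L + Lᵀ V is symmetric positive semidefinite and its kernel is exactly the span of the all-ones vector 1ₙ. -/
open Matrix Filter Set

noncomputable section

/-- `L` is the Laplacian matrix of a weighted digraph: nonpositive off-diagonal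
entries and zero row sums (`L 1ₙ = 0`). -/
def Matrix.IsLaplacian {ι : Type*} [Fintype ι] (L : Matrix ι ι ℝ) : Prop :=
  (∀ i j, i ≠ j → L i j ≤ 0) ∧ L.mulVec (fun _ => 1) = 0

/-- The digraph associated with `L` has an edge `a → b` exactly when `L b a < 0`, `a ≠ b`. -/
def Matrix.digraphEdge {ι : Type*} (L : Matrix ι ι ℝ) (a b : ι) : Prop :=
  a ≠ b ∧ L b a < 0

/-- The digraph associated with `L` is strongly connected: for every ordered pair of
distinct nodes there is a directed path from the first to the second. -/
def Matrix.IsStronglyConnectedDigraph {ι : Type*} (L : Matrix ι ι ℝ) : Prop :=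
  ∀ i j : ι, i ≠ j → Relation.TransGen L.digraphEdge i j

/-- `M` is a nonsingular M-matrix: nonpositive off-diagonal entries and every
(complex) eigenvalue has strictly positive real part. -/
def Matrix.IsNonsingularMMatrix {ι : Type*} [Fintype ι] [DecidableEq ι]
    (M : Matrix ι ι ℝ) : Prop :=
  (∀ i j, i ≠ j → M i j ≤ 0) ∧
  ∀ μ ∈ (M.map (fun a => (a : ℂ))).charpoly.roots, 0 < μ.re

/-- Euclidean norm of a vector. -/
def euclNorm {ι : Type*} [Fintype ι] (v : ι → ℝ) : ℝ := Real.sqrt (v ⬝ᵥ v)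

/-!
The entries of `v` are positive because the set `{v ≤ 0}` is closed under the edges of the
digraph: the total weight `vᵀL` sends into it is zero, yet every contribution is `≤ 0`. Strong
connectivity then forces `{v ≤ 0}` to be empty, since `∑ vᵢ = 1`. With `v > 0` and the two null
relations `L 1 = 0`, `vᵀ L = 0`, the quadratic form of `Q` is
`xᵀ Q x = ∑ᵢⱼ (-vᵢ Lᵢⱼ) (xᵢ - xⱼ)²`, a sum of nonnegative terms; it vanishes exactly when `x` is
constant along every edge, hence constant by strong connectivity.
-/

open Finset

namespace Matrix

variable {ι : Type*} {L : Matrix ι ι ℝ} {v : ι → ℝ}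

lemma IsStronglyConnectedDigraph.forall_of_edge_closed (hSC : L.IsStronglyConnectedDigraph)
    {p : ι → Prop} (hp : ∀ a b, L.digraphEdge a b → p a → p b) {a : ι} (ha : p a) (b : ι) :
    p b := by
  rcases eq_or_ne a b with rfl | hab
  · exact ha
  obtain path := hSC a b hab
  clear hab
  induction path with
  | single e => exact hp _ _ e ha
  | tail _ e ih => exact hp _ _ e ih

variable [Fintype ι]

lemma IsLaplacian.sum_row_eq_zero (hL : L.IsLaplacian) (i : ι) : ∑ j, L i j = 0 := by
  simpa [mulVec, dotProduct] using congrFun hL.2 i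

lemma IsLaplacian.sum_nonpos_of_notMem (hL : L.IsLaplacian) {S : Finset ι} {i : ι}
    (hi : i ∉ S) : ∑ j ∈ S, L i j ≤ 0 :=
  sum_nonpos fun j hj => hL.1 i j fun h => hi (h ▸ hj)

lemma IsLaplacian.sum_nonneg_of_mem [DecidableEq ι] (hL : L.IsLaplacian) {S : Finset ι}
    {i : ι} (hi : i ∈ S) : 0 ≤ ∑ j ∈ S, L i j := by
  have hcompl : ∑ j ∈ Sᶜ, L i j ≤ 0 := hL.sum_nonpos_of_notMem (by simpa using hi)
  have hsplit := sum_add_sum_compl S (L i)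
  rw [hL.sum_row_eq_zero] at hsplit
  linarith

lemma IsLaplacian.nonpos_of_digraphEdge (hL : L.IsLaplacian) (hv : v ᵥ* L = 0) {a b : ι}
    (hab : L.digraphEdge a b) (ha : v a ≤ 0) : v b ≤ 0 := by
  classical
  set S := Finset.univ.filter fun i => v i ≤ 0
  by_contra! hb
  have hflow : ∑ i, v i * ∑ j ∈ S, L i j = 0 := by
    simp_rw [mul_sum]
    rw [sum_comm]
    exact sum_eq_zero fun j _ => by simpa [vecMul, dotProduct] using congrFun hv j
  have hterm : ∀ i ∈ Finset.univ, v i * ∑ j ∈ S, L i j ≤ 0 := by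
    intro i _
    by_cases hi : v i ≤ 0
    · exact mul_nonpos_of_nonpos_of_nonneg hi (hL.sum_nonneg_of_mem (by simpa [S] using hi))
    · exact mul_nonpos_of_nonneg_of_nonpos (le_of_not_ge hi)
        (hL.sum_nonpos_of_notMem (by simpa [S] using hi))
  have hbS : ∑ j ∈ S, L b j = 0 :=
    (mul_eq_zero.mp ((sum_eq_zero_iff_of_nonpos hterm).mp hflow b (mem_univ b))).resolve_left
      hb.ne'
  have hb_notMem : b ∉ S := by simpa [S] using hb
  have hba : L b a = 0 :=
    (sum_eq_zero_iff_of_nonpos fun j hj => hL.1 b j fun h => hb_notMem (h ▸ hj)).mp hbS a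
      (by simpa [S] using ha)
  exact hab.2.ne hba

lemma IsLaplacian.pos_of_vecMul_eq_zero (hL : L.IsLaplacian) (hSC : L.IsStronglyConnectedDigraph)
    (hv : v ᵥ* L = 0) (hsum : 0 < ∑ i, v i) (i : ι) : 0 < v i := by
  by_contra! hi
  have hall := hSC.forall_of_edge_closed (fun _ _ e => hL.nonpos_of_digraphEdge hv e) hi
  exact hsum.not_ge (sum_nonpos fun j _ => hall j)

lemma dotProduct_add_transpose_mulVec {R : Type*} [CommSemiring R] (A : Matrix ι ι R)
    (x : ι → R) : x ⬝ᵥ (A + Aᵀ) *ᵥ x = 2 * (x ⬝ᵥ A *ᵥ x) := by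
  rw [add_mulVec, dotProduct_add, mulVec_transpose, dotProduct_comm x (x ᵥ* A),
    ← dotProduct_mulVec]
  ring

lemma IsLaplacian.mul_sq_nonneg (hL : L.IsLaplacian) (hv : ∀ i, 0 ≤ v i) (x : ι → ℝ)
    (i j : ι) : 0 ≤ -(v i * L i j) * (x i - x j) ^ 2 := by
  rcases eq_or_ne i j with rfl | hij
  · simp
  · exact mul_nonneg (neg_nonneg.mpr (mul_nonpos_of_nonneg_of_nonpos (hv i) (hL.1 i j hij)))
      (sq_nonneg _)

variable [DecidableEq ι]

lemma transpose_diagonal_mul (v : ι → ℝ) (L : Matrix ι ι ℝ) :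
    (diagonal v * L)ᵀ = Lᵀ * diagonal v := by
  rw [transpose_mul, diagonal_transpose]

lemma dotProduct_diagonal_mul_add_transpose_mulVec (hrow : L *ᵥ (fun _ => 1) = 0)
    (hv : v ᵥ* L = 0) (x : ι → ℝ) :
    x ⬝ᵥ (diagonal v * L + Lᵀ * diagonal v) *ᵥ x
      = ∑ i, ∑ j, -(v i * L i j) * (x i - x j) ^ 2 := by
  have hrow' : ∀ i, ∑ j, L i j = 0 := fun i => by
    simpa [mulVec, dotProduct] using congrFun hrow i
  have hcol : ∀ j, ∑ i, v i * L i j = 0 := fun j => by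
    simpa [vecMul, dotProduct] using congrFun hv j
  have hsq : ∀ i j, -(v i * L i j) * (x i - x j) ^ 2
      = 2 * (x i * (v i * L i j * x j)) - v i * x i ^ 2 * L i j - x j ^ 2 * (v i * L i j) :=
    fun i j => by ring
  have h₁ : ∑ i, ∑ j, v i * x i ^ 2 * L i j = 0 :=
    sum_eq_zero fun i _ => by rw [← mul_sum, hrow', mul_zero]
  have h₂ : ∑ i, ∑ j, x j ^ 2 * (v i * L i j) = 0 := by
    rw [sum_comm]
    exact sum_eq_zero fun j _ => by rw [← mul_sum, hcol, mul_zero]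
  rw [← transpose_diagonal_mul, dotProduct_add_transpose_mulVec]
  simp only [hsq, sum_sub_distrib, h₁, h₂, sub_zero]
  simp [dotProduct, mulVec, mul_sum]

lemma isSymm_diagonal_mul_add_transpose (v : ι → ℝ) (L : Matrix ι ι ℝ) :
    (diagonal v * L + Lᵀ * diagonal v).IsSymm := by
  rw [← transpose_diagonal_mul]
  exact isSymm_add_transpose_self _

lemma IsLaplacian.posSemidef_diagonal_mul_add_transpose (hL : L.IsLaplacian)
    (hv : v ᵥ* L = 0) (hnonneg : ∀ i, 0 ≤ v i) :
    (diagonal v * L + Lᵀ * diagonal v).PosSemidef := by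
  refine .of_dotProduct_mulVec_nonneg ?_ fun x => ?_
  · exact isHermitian_iff_isSymm.mpr (isSymm_diagonal_mul_add_transpose v L)
  · rw [star_trivial, dotProduct_diagonal_mul_add_transpose_mulVec hL.2 hv]
    exact sum_nonneg fun i _ => sum_nonneg fun j _ => hL.mul_sq_nonneg hnonneg x i j

lemma IsLaplacian.eq_of_digraphEdge_of_mulVec_eq_zero (hL : L.IsLaplacian) (hv : v ᵥ* L = 0)
    (hpos : ∀ i, 0 < v i) {x : ι → ℝ} (hx : (diagonal v * L + Lᵀ * diagonal v) *ᵥ x = 0)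
    {a b : ι} (hab : L.digraphEdge a b) : x a = x b := by
  have hnonneg := hL.mul_sq_nonneg (fun i => (hpos i).le) x
  have hq : ∑ i, ∑ j, -(v i * L i j) * (x i - x j) ^ 2 = 0 := by
    rw [← dotProduct_diagonal_mul_add_transpose_mulVec hL.2 hv, hx, dotProduct_zero]
  have hrow_b := (sum_eq_zero_iff_of_nonneg fun i _ => sum_nonneg fun j _ => hnonneg i j).mp hq
    b (mem_univ b)
  have hba := (sum_eq_zero_iff_of_nonneg fun j _ => hnonneg b j).mp hrow_b a (mem_univ a)
  have hweight : 0 < -(v b * L b a) := neg_pos.mpr (mul_neg_of_pos_of_neg (hpos b) hab.2)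
  have hsq := (mul_eq_zero.mp hba).resolve_left hweight.ne'
  exact (sub_eq_zero.mp (pow_eq_zero_iff two_ne_zero |>.mp hsq)).symm

lemma IsLaplacian.mulVec_diagonal_mul_add_transpose_eq_zero_iff (hL : L.IsLaplacian)
    (hSC : L.IsStronglyConnectedDigraph) (hv : v ᵥ* L = 0) (hpos : ∀ i, 0 < v i)
    (x : ι → ℝ) :
    (diagonal v * L + Lᵀ * diagonal v) *ᵥ x = 0 ↔ ∃ c : ℝ, x = fun _ => c := by
  constructor
  · intro hx
    rcases isEmpty_or_nonempty ι with hι | ⟨⟨a⟩⟩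
    · exact ⟨0, funext hι.elim⟩
    · refine ⟨x a, funext (hSC.forall_of_edge_closed (p := fun b => x b = x a) ?_ rfl)⟩
      exact fun b c e hb => (hL.eq_of_digraphEdge_of_mulVec_eq_zero hv hpos hx e).symm.trans hb
  · rintro ⟨c, rfl⟩
    have hconst : (fun _ : ι => c) = c • fun _ => (1 : ℝ) := by ext; simp
    have hdiag : diagonal v *ᵥ (fun _ => (1 : ℝ)) = v := by ext; simp [mulVec_diagonal]
    rw [hconst, mulVec_smul, add_mulVec, ← mulVec_mulVec, ← mulVec_mulVec, hL.2, mulVec_zero,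
      hdiag, mulVec_transpose, hv, add_zero, smul_zero]

end Matrix

theorem statement0_general {n : ℕ} (L : Matrix (Fin n) (Fin n) ℝ)
    (hLap : L.IsLaplacian) (hSC : L.IsStronglyConnectedDigraph)
    (v : Fin n → ℝ)
    (hv_left : Matrix.vecMul v L = 0)
    (hv_norm : v ⬝ᵥ (fun _ => 1) = 1) :
    (∀ i, 0 < v i) ∧
    (Matrix.diagonal v * L + Lᵀ * Matrix.diagonal v)ᵀ
      = Matrix.diagonal v * L + Lᵀ * Matrix.diagonal v ∧
    (Matrix.diagonal v * L + Lᵀ * Matrix.diagonal v).PosSemidef ∧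
    (∀ x : Fin n → ℝ,
      (Matrix.diagonal v * L + Lᵀ * Matrix.diagonal v).mulVec x = 0 ↔
        ∃ c : ℝ, x = fun _ => c) := by
  have hsum : ∑ i, v i = 1 := by simpa [dotProduct] using hv_norm
  have hpos : ∀ i, 0 < v i := hLap.pos_of_vecMul_eq_zero hSC hv_left (hsum ▸ one_pos)
  exact ⟨hpos, isSymm_diagonal_mul_add_transpose v L,
    hLap.posSemidef_diagonal_mul_add_transpose hv_left fun i => (hpos i).le,
    hLap.mulVec_diagonal_mul_add_transpose_eq_zero_iff hSC hv_left hpos⟩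

/-- For the Laplacian `L` of a strongly connected weighted digraph and
a nonzero left eigenvector `v` for the eigenvalue 0 normalized by `vᵀ1ₙ = 1`, the entries
of `v` are strictly positive and `Q := diag(v) L + Lᵀ diag(v)` is symmetric positive
semidefinite with kernel exactly the span of the all-ones vector. -/
theorem statement0 {n : ℕ} (L : Matrix (Fin n) (Fin n) ℝ)
    (hLap : L.IsLaplacian) (hSC : L.IsStronglyConnectedDigraph)
    (v : Fin n → ℝ) (hv_ne : v ≠ 0)
    (hv_left : Matrix.vecMul v L = 0)
    (hv_norm : v ⬝ᵥ (fun _ => 1) = 1) :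
    (∀ i, 0 < v i) ∧
    (Matrix.diagonal v * L + Lᵀ * Matrix.diagonal v)ᵀ
      = Matrix.diagonal v * L + Lᵀ * Matrix.diagonal v ∧
    (Matrix.diagonal v * L + Lᵀ * Matrix.diagonal v).PosSemidef ∧
    (∀ x : Fin n → ℝ,
      (Matrix.diagonal v * L + Lᵀ * Matrix.diagonal v).mulVec x = 0 ↔
        ∃ c : ℝ, x = fun _ => c) :=
  statement0_general L hLap hSC v hv_left hv_norm
end
end

section
/- Let M ∈ ℝ^{n×n} be a nonsingular M-matrix. Then M is invertible, the vectors M⁻¹1ₙ and M⁻ᵀ1ₙ have strictly positive entries, the diagonal matrix R := diag(M⁻ᵀ1ₙ) · (diag(M⁻¹1ₙ))⁻¹ is positive definite, and the symmetric matrix S := R M + Mᵀ R is positive definite. -/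
/-!
For small `t > 0` the matrix `X = 1 - t • M` is entrywise nonnegative, and since every eigenvalue
of `M` lies in the open right half-plane, the spectrum of `X` lies in the open unit disc. By
Gelfand's formula the Neumann series `∑ Xᵏ` converges, so `M⁻¹ = t • ∑ Xᵏ` is entrywise
nonnegative. As `M` has nonpositive off-diagonal entries, `v = M⁻¹ 1 ≥ 0` together with `M v = 1`
forces `v > 0`; likewise `w = M⁻ᵀ 1 > 0`, and `R = diag (w / v)`.

The matrix `S = R M + Mᵀ R` is symmetric, has nonpositive off-diagonal entries and satisfies
`S v = R 1 + Mᵀ w > 0`. Hence `diag v * S * diag v` is strictly diagonally dominant with positive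
diagonal, so Gershgorin's theorem makes it, and hence `S`, positive definite.
-/

open Matrix Filter Set

noncomputable section

open scoped Topology Pointwise NNReal ENNReal

namespace spectrum

variable {A : Type*} [NormedRing A] [NormedAlgebra ℂ A] [CompleteSpace A]

theorem eventually_nnnorm_pow_le_of_spectralRadius_lt {a : A} {r : ℝ≥0}
    (h : spectralRadius ℂ a < r) : ∀ᶠ n : ℕ in atTop, ‖a ^ n‖₊ ≤ r ^ n := by
  filter_upwards [(pow_nnnorm_pow_one_div_tendsto_nhds_spectralRadius a).eventually_lt_const h,
    eventually_ge_atTop 1] with n hn hn1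
  rw [one_div, ENNReal.rpow_inv_lt_iff (by positivity), ENNReal.rpow_natCast,
    ← ENNReal.coe_pow, ENNReal.coe_lt_coe] at hn
  exact hn.le

theorem summable_norm_pow_of_spectralRadius_lt_one {a : A} (h : spectralRadius ℂ a < 1) :
    Summable fun n : ℕ => ‖a ^ n‖ := by
  obtain ⟨r, har, hr1⟩ := ENNReal.lt_iff_exists_nnreal_btwn.mp h
  refine (summable_geometric_of_lt_one r.coe_nonneg (by exact_mod_cast hr1))
    |>.of_norm_bounded_eventually_nat ?_
  filter_upwards [eventually_nnnorm_pow_le_of_spectralRadius_lt har] with n hn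
  rw [norm_norm]
  exact_mod_cast hn

theorem one_sub_smul_eq {B : Type*} [Ring B] [Algebra ℂ B] (b : B) {t : ℂ} (ht : t ≠ 0) :
    spectrum ℂ (1 - t • b) = {1} - t • spectrum ℂ b := by
  have := unit_smul_eq_smul b (Units.mk0 t ht)
  rw [Units.smul_mk0, Units.smul_mk0] at this
  rw [← this, singleton_sub_eq, map_one]

end spectrum

theorem Complex.eventually_norm_one_sub_mul_lt_one {μ : ℂ} (hμ : 0 < μ.re) :
    ∀ᶠ t : ℝ in 𝓝[>] 0, ‖1 - t * μ‖ < 1 := by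
  have hsmall : ∀ᶠ t : ℝ in 𝓝 0, t * ‖μ‖ ^ 2 < 2 * μ.re :=
    ((continuous_id.mul continuous_const).tendsto' 0 0 (zero_mul _)).eventually_lt_const
      (by positivity)
  filter_upwards [self_mem_nhdsWithin, nhdsWithin_le_nhds hsmall] with t (ht : 0 < t) hts
  -- `‖1 - t μ‖² = 1 - 2 t Re μ + t² ‖μ‖²`
  rw [← sq_lt_one_iff₀ (norm_nonneg _), Complex.sq_norm, Complex.normSq_apply]
  rw [Complex.sq_norm, Complex.normSq_apply] at hts
  simp only [Complex.sub_re, Complex.one_re, Complex.mul_re, Complex.ofReal_re,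
    Complex.ofReal_im, Complex.sub_im, Complex.one_im, Complex.mul_im]
  nlinarith

namespace Matrix

section LinftyOpNorm

attribute [local instance] Matrix.linftyOpNormedAddCommGroup Matrix.linftyOpNormedRing
  Matrix.linftyOpNormedAlgebra

variable {ι : Type*} [Fintype ι] [DecidableEq ι]

theorem summable_pow_of_forall_spectrum_norm_lt_one (X : Matrix ι ι ℝ)
    (hX : ∀ z ∈ spectrum ℂ (X.map (fun a => (a : ℂ))), ‖z‖ < 1) :
    Summable fun k : ℕ => X ^ k := by
  set Xc := X.map (fun a => (a : ℂ))
  have hρ : spectralRadius ℂ Xc < 1 := by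
    by_cases hne : (spectrum ℂ Xc).Nonempty
    · exact spectrum.spectralRadius_lt_of_forall_lt_of_nonempty hne fun z hz => by
        exact_mod_cast hX z hz
    · simp [spectralRadius, Set.not_nonempty_iff_eq_empty.mp hne]
  have hC : Summable fun k : ℕ => Xc ^ k :=
    (spectrum.summable_norm_pow_of_spectralRadius_lt_one hρ).of_norm
  refine Pi.summable.mpr fun i => Pi.summable.mpr fun j => ?_
  refine Complex.summable_ofReal.mp ?_
  convert Pi.summable.mp (Pi.summable.mp hC i) j using 2 with k
  exact congr_fun₂ (X.map_pow Complex.ofRealHom k) i j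

end LinftyOpNorm

variable {ι : Type*} [Fintype ι]

open Finset in
theorem pos_of_offDiag_nonpos_of_mulVec_pos {M : Matrix ι ι ℝ}
    (hZ : ∀ i j, i ≠ j → M i j ≤ 0) {v : ι → ℝ} (hv : ∀ i, 0 ≤ v i) {i : ι}
    (hMv : 0 < (M *ᵥ v) i) : 0 < v i := by
  refine (hv i).lt_of_ne' fun hvi => hMv.not_ge ?_
  rw [mulVec, dotProduct]
  refine sum_nonpos fun j _ => ?_
  rcases eq_or_ne i j with rfl | hij
  · rw [hvi, mul_zero]
  · exact mul_nonpos_of_nonpos_of_nonneg (hZ i j hij) (hv j)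

variable [DecidableEq ι]

theorem mulVec_nonsing_inv_mulVec {α : Type*} [CommRing α] {A : Matrix ι ι α} (hA : IsUnit A)
    (x : ι → α) : A *ᵥ (A⁻¹ *ᵥ x) = x := by
  rw [mulVec_mulVec, mul_nonsing_inv _ ((isUnit_iff_isUnit_det A).mp hA), one_mulVec]

open Finset in
theorem IsHermitian.posDef_of_sum_abs_lt_diag {A : Matrix ι ι ℝ} (hA : A.IsHermitian)
    (hdom : ∀ k, ∑ j ∈ univ.erase k, |A k j| < A k k) : A.PosDef := by
  refine hA.posDef_iff_eigenvalues_pos.mpr fun i => ?_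
  have hμ : Module.End.HasEigenvalue (toLin' A) (hA.eigenvalues i) :=
    Module.End.hasEigenvalue_iff_mem_spectrum.mpr <| by
      simpa only [spectrum_toLin'] using hA.eigenvalues_mem_spectrum_real i
  obtain ⟨k, hk⟩ := eigenvalue_mem_ball hμ
  simp only [Metric.mem_closedBall, Real.dist_eq, Real.norm_eq_abs] at hk
  linarith [neg_abs_le (hA.eigenvalues i - A k k), hdom k]

open Finset in
theorem IsHermitian.posDef_of_offDiag_nonpos_of_mulVec_pos {S : Matrix ι ι ℝ}
    (hS : S.IsHermitian) (hZ : ∀ i j, i ≠ j → S i j ≤ 0) {v : ι → ℝ} (hv : ∀ i, 0 < v i)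
    (hSv : ∀ i, 0 < (S *ᵥ v) i) : S.PosDef := by
  have hD : IsUnit (diagonal v) :=
    isUnit_diagonal.mpr (Pi.isUnit_iff.mpr fun i => (hv i).ne'.isUnit)
  have hstar : star (diagonal v) = diagonal v := by
    rw [star_eq_conjTranspose, diagonal_conjTranspose, star_trivial]
  rw [← hD.posDef_star_left_conjugate_iff]
  refine IsHermitian.posDef_of_sum_abs_lt_diag
    (hstar ▸ isHermitian_conjTranspose_mul_mul _ hS) fun k => ?_
  have hentry : ∀ j, (star (diagonal v) * S * diagonal v) k j = v k * S k j * v j := by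
    intro j; rw [hstar, mul_diagonal, diagonal_mul]
  have hrow : v k * (S *ᵥ v) k = v k * S k k * v k + ∑ j ∈ univ.erase k, v k * S k j * v j := by
    rw [mulVec, dotProduct, mul_sum, ← add_sum_erase _ _ (mem_univ k)]
    simp only [mul_assoc]
  have habs : ∀ j ∈ univ.erase k, |v k * S k j * v j| = -(v k * S k j * v j) := fun j hj =>
    abs_of_nonpos <| mul_nonpos_of_nonpos_of_nonneg
      (mul_nonpos_of_nonneg_of_nonpos (hv k).le (hZ k j (ne_of_mem_erase hj).symm)) (hv j).le
  simp only [hentry, sum_congr rfl habs, sum_neg_distrib]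
  linarith [mul_pos (hv k) (hSv k)]

theorem posDef_diagonal_mul_add_transpose_mul_diagonal {M : Matrix ι ι ℝ}
    (hZ : ∀ i j, i ≠ j → M i j ≤ 0) {v w : ι → ℝ} (hv : ∀ i, 0 < v i) (hw : ∀ i, 0 < w i)
    (hMv : ∀ i, 0 ≤ (M *ᵥ v) i) (hMw : ∀ i, 0 < (Mᵀ *ᵥ w) i) :
    (diagonal (w / v) * M + Mᵀ * diagonal (w / v)).PosDef := by
  have hr : ∀ i, 0 < (w / v) i := fun i => div_pos (hw i) (hv i)
  refine IsHermitian.posDef_of_offDiag_nonpos_of_mulVec_pos ?_ (fun i j hij => ?_) hv fun i => ?_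
  · rw [IsHermitian, conjTranspose_eq_transpose_of_trivial, transpose_add, transpose_mul,
      transpose_mul, diagonal_transpose, transpose_transpose, add_comm]
  · rw [add_apply, diagonal_mul, mul_diagonal, transpose_apply]
    exact add_nonpos (mul_nonpos_of_nonneg_of_nonpos (hr i).le (hZ i j hij))
      (mul_nonpos_of_nonpos_of_nonneg (hZ j i hij.symm) (hr j).le)
  · have hrv : diagonal (w / v) *ᵥ v = w := by
      ext j; rw [mulVec_diagonal, Pi.div_apply, div_mul_cancel₀ _ (hv j).ne']
    rw [add_mulVec, ← mulVec_mulVec, ← mulVec_mulVec, hrv, Pi.add_apply, mulVec_diagonal]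
    exact add_pos_of_nonneg_of_pos (mul_nonneg (hr i).le (hMv i)) (hMw i)

namespace IsNonsingularMMatrix

variable {M : Matrix ι ι ℝ}

theorem re_pos_of_mem_spectrum (hM : M.IsNonsingularMMatrix) {μ : ℂ}
    (hμ : μ ∈ spectrum ℂ (M.map (fun a => (a : ℂ)))) : 0 < μ.re :=
  hM.2 μ <| (Polynomial.mem_roots (charpoly_monic _).ne_zero).mpr <|
    mem_spectrum_iff_isRoot_charpoly.mp hμ

protected theorem transpose (hM : M.IsNonsingularMMatrix) : Mᵀ.IsNonsingularMMatrix :=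
  ⟨fun i j hij => hM.1 j i hij.symm, fun μ hμ => hM.2 μ <| by
    rwa [transpose_map, charpoly_transpose] at hμ⟩

theorem exists_one_sub_smul_nonneg_and_spectrum_norm_lt_one (hM : M.IsNonsingularMMatrix) :
    ∃ t : ℝ, 0 < t ∧ (∀ i j, 0 ≤ (1 - t • M) i j) ∧
      ∀ z ∈ spectrum ℂ ((1 - t • M).map (fun a => (a : ℂ))), ‖z‖ < 1 := by
  have hdiag : ∀ᶠ t : ℝ in 𝓝[>] 0, ∀ i, t * M i i ≤ 1 :=
    eventually_all.mpr fun i => nhdsWithin_le_nhds <|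
      ((continuous_id.mul continuous_const).tendsto' 0 0 (zero_mul _)).eventually_le_const
        zero_lt_one
  have hspec : ∀ᶠ t : ℝ in 𝓝[>] 0,
      ∀ μ ∈ spectrum ℂ (M.map (fun a => (a : ℂ))), ‖1 - t * μ‖ < 1 :=
    (finite_spectrum _).eventually_all.mpr fun μ hμ =>
      Complex.eventually_norm_one_sub_mul_lt_one (hM.re_pos_of_mem_spectrum hμ)
  obtain ⟨t, ht, htdiag, htspec⟩ :=
    ((eventually_mem_nhdsWithin (a := (0 : ℝ)) (s := Ioi 0)).and (hdiag.and hspec)).exists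
  refine ⟨t, ht, fun i j => ?_, fun z hz => ?_⟩
  · rcases eq_or_ne i j with rfl | hij
    · simpa [one_apply_eq, sub_nonneg] using htdiag i
    · simpa [one_apply_ne hij] using mul_nonpos_of_nonneg_of_nonpos (le_of_lt ht) (hM.1 i j hij)
  · have hmap : (1 - t • M).map (fun a => (a : ℂ)) = 1 - (t : ℂ) • M.map (fun a => (a : ℂ)) := by
      ext i j; by_cases hij : i = j <;> simp [hij]
    rw [hmap, spectrum.one_sub_smul_eq _ (by exact_mod_cast (ne_of_gt ht))] at hz
    obtain ⟨_, rfl, _, ⟨μ, hμ, rfl⟩, rfl⟩ := hz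
    exact htspec μ hμ

theorem exists_nonneg_right_inv (hM : M.IsNonsingularMMatrix) :
    ∃ T : Matrix ι ι ℝ, M * T = 1 ∧ ∀ i j, 0 ≤ T i j := by
  obtain ⟨t, ht, hX, hXspec⟩ := hM.exists_one_sub_smul_nonneg_and_spectrum_norm_lt_one
  set X := 1 - t • M
  have hsum : HasSum (fun k : ℕ => X ^ k) (∑' k, X ^ k) :=
    (summable_pow_of_forall_spectrum_norm_lt_one X hXspec).hasSum
  refine ⟨t • ∑' k, X ^ k, ?_, fun i j => ?_⟩
  · rw [mul_smul_comm, ← smul_mul_assoc, show t • M = 1 - X from (sub_sub_cancel 1 _).symm]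
    exact hsum.summable.one_sub_mul_tsum_pow
  · exact mul_nonneg ht.le <|
      (Pi.hasSum.mp (Pi.hasSum.mp hsum i) j).nonneg fun k => pow_apply_nonneg hX k i j

protected theorem isUnit (hM : M.IsNonsingularMMatrix) : IsUnit M :=
  let ⟨_, hT, _⟩ := hM.exists_nonneg_right_inv
  (isUnit_iff_isUnit_det M).mpr (isUnit_det_of_right_inverse hT)

theorem inv_apply_nonneg (hM : M.IsNonsingularMMatrix) (i j : ι) : 0 ≤ M⁻¹ i j := by
  obtain ⟨T, hT, hTnn⟩ := hM.exists_nonneg_right_inv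
  rw [inv_eq_right_inv hT]
  exact hTnn i j

theorem inv_mulVec_one_pos (hM : M.IsNonsingularMMatrix) (i : ι) :
    0 < (M⁻¹ *ᵥ fun _ => 1) i := by
  refine pos_of_offDiag_nonpos_of_mulVec_pos hM.1 (fun j => ?_)
    (by rw [mulVec_nonsing_inv_mulVec hM.isUnit]; exact zero_lt_one)
  exact Finset.sum_nonneg fun k _ => mul_nonneg (hM.inv_apply_nonneg j k) zero_le_one

end IsNonsingularMMatrix

end Matrix

/-- A nonsingular M-matrix `M` is invertible, the vectors `M⁻¹1ₙ` and
`M⁻ᵀ1ₙ` are entrywise strictly positive, the diagonal matrix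
`R := diag(M⁻ᵀ1ₙ)(diag(M⁻¹1ₙ))⁻¹` is positive definite, and `S := R M + Mᵀ R` is
symmetric positive definite. -/
theorem statement1 {n : ℕ} (M : Matrix (Fin n) (Fin n) ℝ)
    (hM : M.IsNonsingularMMatrix) :
    IsUnit M ∧
    (∀ i, 0 < M⁻¹.mulVec (fun _ => 1) i) ∧
    (∀ i, 0 < (Mᵀ)⁻¹.mulVec (fun _ => 1) i) ∧
    (Matrix.diagonal ((Mᵀ)⁻¹.mulVec (fun _ => 1)) *
      (Matrix.diagonal (M⁻¹.mulVec (fun _ => 1)))⁻¹).PosDef ∧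
    ((Matrix.diagonal ((Mᵀ)⁻¹.mulVec (fun _ => 1)) *
        (Matrix.diagonal (M⁻¹.mulVec (fun _ => 1)))⁻¹) * M +
      Mᵀ * (Matrix.diagonal ((Mᵀ)⁻¹.mulVec (fun _ => 1)) *
        (Matrix.diagonal (M⁻¹.mulVec (fun _ => 1)))⁻¹)).PosDef := by
  set v := M⁻¹ *ᵥ fun _ => 1
  set w := (Mᵀ)⁻¹ *ᵥ fun _ => 1
  have hv : ∀ i, 0 < v i := hM.inv_mulVec_one_pos
  have hw : ∀ i, 0 < w i := hM.transpose.inv_mulVec_one_pos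
  have hR : diagonal w * (diagonal v)⁻¹ = diagonal (w / v) := by
    rw [inv_eq_right_inv (B := diagonal v⁻¹), diagonal_mul_diagonal, div_eq_mul_inv]
    · rfl
    · rw [diagonal_mul_diagonal, ← diagonal_one]
      exact congrArg diagonal (funext fun i => mul_inv_cancel₀ (hv i).ne')
  refine ⟨hM.isUnit, hv, hw, ?_, ?_⟩
  · rw [hR]
    exact PosDef.diagonal fun i => div_pos (hw i) (hv i)
  · rw [hR]
    refine posDef_diagonal_mul_add_transpose_mul_diagonal hM.1 hv hw (fun i => ?_) (fun i => ?_)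
    · rw [mulVec_nonsing_inv_mulVec hM.isUnit]; exact zero_le_one
    · rw [mulVec_nonsing_inv_mulVec hM.transpose.isUnit]; exact zero_lt_one
end
end

section
/- Consider n = n_ℓ + n_f scalar systems ẋᵢ = fᵢ(xᵢ) + uᵢ with fᵢ : ℝ → ℝ continuous, coupled by uᵢ = −γ Σⱼ a_{ij}(xᵢ − xⱼ) with γ > 0 and weights a_{ij} ≥ 0, so that the closed loop reads ẋ = F(x) − γ L x where F(x)ᵢ = fᵢ(xᵢ) and L is the Laplacian of the interconnection digraph. Assume L, after a relabeling of nodes, has the block lower-triangular form L = [[L_ℓ, 0], [−A, M]] where L_ℓ ∈ ℝ^{n_ℓ×n_ℓ} is the Laplacian matrix of a strongly connected weighted digraph, A ∈ ℝ^{n_f×n_ℓ} is entrywise nonnegative, M ∈ ℝ^{n_f×n_f} is a nonsingular M-matrix, and L 1ₙ = 0. Assume further that each node i is state strictly semipassive: there exist a continuously differentiable storage function Vᵢ : ℝ → ℝ≥0, a class 𝒦∞ function α̲ᵢ, a constant ρᵢ > 0, a continuous function Hᵢ : ℝ → ℝ, and a continuous function ψᵢ : ℝ≥0 → ℝ>0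 such that α̲ᵢ(|s|) ≤ Vᵢ(s) for all s, Vᵢ′(s)(fᵢ(s) + u) ≤ 2us − Hᵢ(s) for all s, u ∈ ℝ, and Hᵢ(s) ≥ ψᵢ(|s|) whenever |s| ≥ ρᵢ. Then the solutions of the closed-loop system are globally uniformly ultimately bounded, uniformly in γ: for every γ₀ > 0 there exists r > 0 such that for every r₀ > 0 there exists T ≥ 0 such that for every γ ≥ γ₀ and every differentiable x : [0, ∞) → ℝⁿ satisfying ẋ(t) = F(x(t)) − γ L x(t) for all t ≥ 0 and |x(0)| ≤ r₀, one has |x(t)| ≤ r for all t ≥ T. -/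
open Matrix Filter Set

noncomputable section

/-- A class 𝒦∞ function: continuous, strictly increasing, unbounded, vanishing at 0
(viewed as a function `ℝ≥0 → ℝ≥0`, encoded on `Set.Ici 0`). -/
def IsClassKInfty (α : ℝ → ℝ) : Prop :=
  ContinuousOn α (Set.Ici 0) ∧ StrictMonoOn α (Set.Ici 0) ∧ α 0 = 0 ∧
  (∀ s, 0 ≤ s → 0 ≤ α s) ∧ Filter.Tendsto α Filter.atTop Filter.atTop

/-!
Since the dissipation inequality holds for every input `u` and is affine in `u`, it forces
`V'ᵢ(s) = 2s`; at `u = 0` it then gives `s fᵢ(s) ≤ -Hᵢ(s) < 0` for `|s| ≥ ρᵢ`, so outside a box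
every node pushes its state back. The coupling never raises the largest coordinate (nor lowers
the smallest): `L` has nonpositive off-diagonal entries and zero row sums, so `(L x)ᵢ ≥ 0` when
`xᵢ` is maximal, whatever `γ ≥ 0`. Hence `maxᵢ xᵢ` and `-minᵢ xᵢ` stay below a barrier descending
from `max r₀ ρ` at the speed `δ / 2`, where by compactness `fᵢ ≤ -δ` on `[ρ, max r₀ ρ]` and
`fᵢ ≥ δ` on its mirror image; the barrier reaches `ρ` after a time depending only on `r₀`.
-/

open Topology

lemma eventually_sub_lt_mul_sub_of_lt {f : ℝ → ℝ} {t c : ℝ} (hf : ContinuousWithinAt f (Ioi t) t)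
    (hlt : f t < c) (r : ℝ) : ∀ᶠ z in 𝓝[>] t, f z - c < r * (z - t) := by
  have hmid : (f t - c) / 2 < 0 := by linarith
  have hlin : Tendsto (fun z => r * (z - t)) (𝓝[>] t) (𝓝 0) := by
    have : Continuous fun z : ℝ => r * (z - t) := by fun_prop
    simpa using (this.tendsto t).mono_left nhdsWithin_le_nhds
  filter_upwards [(hf.sub_const c).eventually_lt_const (by linarith : f t - c < (f t - c) / 2),
    hlin.eventually_const_lt hmid] with z h₁ h₂
  linarith

lemma HasDerivWithinAt.eventually_sub_lt_mul_sub {f : ℝ → ℝ} {f' t r : ℝ}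
    (hf : HasDerivWithinAt f f' (Ici t) t) (hr : f' < r) :
    ∀ᶠ z in 𝓝[>] t, f z - f t < r * (z - t) := by
  filter_upwards [hf.Ioi_of_Ici.limsup_slope_le' (lt_irrefl t) hr, self_mem_nhdsWithin]
    with z hz hzt
  rwa [slope_def_field, div_lt_iff₀ (sub_pos.2 hzt)] at hz

lemma eventually_slope_sup'_lt {ι : Type*} [Fintype ι] [Nonempty ι] {x : ℝ → ι → ℝ}
    {d : ι → ℝ} {t r : ℝ} (hx : ∀ i, HasDerivWithinAt (fun s => x s i) (d i) (Ici t) t)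
    (hr : ∀ i, x t i = Finset.univ.sup' Finset.univ_nonempty (x t) → d i < r) :
    ∀ᶠ z in 𝓝[>] t, slope (fun s => Finset.univ.sup' Finset.univ_nonempty (x s)) t z < r := by
  have hcoord : ∀ i, ∀ᶠ z in 𝓝[>] t,
      x z i - Finset.univ.sup' Finset.univ_nonempty (x t) < r * (z - t) := by
    intro i
    rcases (Finset.le_sup' (x t) (Finset.mem_univ i)).lt_or_eq with hlt | heq
    · exact eventually_sub_lt_mul_sub_of_lt
        ((hx i).continuousWithinAt.mono Ioi_subset_Ici_self) hlt r
    · simpa only [← heq] using (hx i).eventually_sub_lt_mul_sub (hr i heq)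
  filter_upwards [eventually_all.2 hcoord, self_mem_nhdsWithin] with z hz hzt
  obtain ⟨j, -, hj⟩ := Finset.exists_mem_eq_sup' Finset.univ_nonempty (x z)
  rw [slope_def_field, div_lt_iff₀ (sub_pos.2 hzt), hj]
  exact hz j

theorem forall_image_le_of_deriv_right_lt_deriv_boundary' {ι : Type*} [Fintype ι]
    {x : ℝ → ι → ℝ} {d : ℝ → ι → ℝ} {a b : ℝ} {B B' : ℝ → ℝ}
    (hx : ∀ i, ContinuousOn (fun t => x t i) (Icc a b))
    (hd : ∀ t ∈ Ico a b, ∀ i, HasDerivWithinAt (fun s => x s i) (d t i) (Ici t) t)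
    (ha : ∀ i, x a i ≤ B a) (hB : ContinuousOn B (Icc a b))
    (hB' : ∀ t ∈ Ico a b, HasDerivWithinAt B (B' t) (Ici t) t)
    (bound : ∀ t ∈ Ico a b, ∀ i, x t i = B t → (∀ j, x t j ≤ x t i) → d t i < B' t) :
    ∀ t ∈ Icc a b, ∀ i, x t i ≤ B t := by
  cases isEmpty_or_nonempty ι
  · exact fun _ _ i => isEmptyElim i
  set g : ℝ → ℝ := fun t => Finset.univ.sup' Finset.univ_nonempty (x t)
  have hle_g : ∀ t i, x t i ≤ g t := fun t i => Finset.le_sup' (x t) (Finset.mem_univ i)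
  have hactive : ∀ t, (Finset.univ.filter fun i => x t i = g t).Nonempty := fun t =>
    let ⟨i, _, hi⟩ := Finset.exists_mem_eq_sup' Finset.univ_nonempty (x t)
    ⟨i, Finset.mem_filter.2 ⟨Finset.mem_univ i, hi.symm⟩⟩
  set g' : ℝ → ℝ := fun t => (Finset.univ.filter fun i => x t i = g t).sup' (hactive t) (d t)
  have hg_le : ∀ t ∈ Icc a b, g t ≤ B t := by
    refine image_le_of_liminf_slope_right_lt_deriv_boundary' (f' := g')
      (ContinuousOn.finset_sup'_apply _ fun i _ => hx i) ?_ ?_ hB hB' ?_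
    · intro t ht r hr
      refine (eventually_slope_sup'_lt (hd t ht) fun i hi => ?_).frequently
      exact (Finset.sup'_lt_iff _).1 hr i (Finset.mem_filter.2 ⟨Finset.mem_univ i, hi⟩)
    · obtain ⟨i, _, hi⟩ := Finset.exists_mem_eq_sup' Finset.univ_nonempty (x a)
      simpa only [g, hi] using ha i
    · refine fun t ht hgt => (Finset.sup'_lt_iff _).2 fun i hi => ?_
      have hi : x t i = g t := (Finset.mem_filter.1 hi).2
      exact bound t ht i (hi.trans hgt) fun j => hi ▸ hle_g t j
  exact fun t ht i => (hle_g t i).trans (hg_le t ht)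

lemma Matrix.IsLaplacian.mulVec_apply_nonneg_of_forall_le {ι : Type*} [Fintype ι]
    {L : Matrix ι ι ℝ} (hL : L.IsLaplacian) {v : ι → ℝ} {i : ι} (hi : ∀ j, v j ≤ v i) :
    0 ≤ (L *ᵥ v) i := by
  have hrow : ∑ j, L i j = 0 := by simpa [mulVec, dotProduct] using congrFun hL.2 i
  have : (L *ᵥ v) i = ∑ j, L i j * (v j - v i) := by
    simp only [mulVec, dotProduct, mul_sub, Finset.sum_sub_distrib, ← Finset.sum_mul, hrow,
      zero_mul, sub_zero]
  rw [this]
  refine Finset.sum_nonneg fun j _ => ?_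
  rcases eq_or_ne i j with rfl | hij
  · simp
  · exact mul_nonneg_of_nonpos_of_nonpos (hL.1 i j hij) (sub_nonpos.2 (hi j))

lemma Matrix.fromBlocks_apply_nonpos_of_ne {l m : Type*} {P : Matrix l l ℝ} {Q : Matrix l m ℝ}
    {R : Matrix m l ℝ} {S : Matrix m m ℝ} (hP : ∀ i j, i ≠ j → P i j ≤ 0) (hQ : ∀ i j, Q i j ≤ 0)
    (hR : ∀ i j, R i j ≤ 0) (hS : ∀ i j, i ≠ j → S i j ≤ 0) :
    ∀ i j, i ≠ j → fromBlocks P Q R S i j ≤ 0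
  | .inl i, .inl j, hij => hP i j (ne_of_apply_ne _ hij)
  | .inl i, .inr j, _ => hQ i j
  | .inr i, .inl j, _ => hR i j
  | .inr i, .inr j, hij => hS i j (ne_of_apply_ne _ hij)

lemma eq_zero_of_forall_mul_le {p q : ℝ} (h : ∀ u, p * u ≤ q) : p = 0 := by
  by_contra hp
  have := h ((q + 1) / p)
  rw [mul_div_cancel₀ _ hp] at this
  linarith

lemma mul_neg_of_forall_mul_add_le {v a s c : ℝ} (h : ∀ u, v * (a + u) ≤ 2 * u * s - c)
    (hc : 0 < c) : s * a < 0 := by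
  have hv : v = 2 * s := by
    have := eq_zero_of_forall_mul_le (p := v - 2 * s) (q := -c - v * a) fun u => by linarith [h u]
    linarith
  have := h 0
  rw [hv] at this
  linarith

lemma IsCompact.eventually_forall_le_neg {X : Type*} [TopologicalSpace X] {K : Set X}
    (hK : IsCompact K) {g : X → ℝ} (hg : ContinuousOn g K) (hneg : ∀ x ∈ K, g x < 0) :
    ∀ᶠ δ in 𝓝[>] (0 : ℝ), ∀ x ∈ K, g x ≤ -δ := by
  rcases K.eq_empty_or_nonempty with rfl | hne
  · simp
  obtain ⟨x₀, hx₀, hmax⟩ := hK.exists_isMaxOn hne hg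
  filter_upwards [Ioo_mem_nhdsGT (neg_pos.2 (hneg x₀ hx₀))] with δ hδ x hx
  have : g x ≤ g x₀ := hmax hx
  linarith [hδ.2]

lemma hasDerivWithinAt_max_sub_mul_const {a c ρ : ℝ} (hc : 0 ≤ c) (t : ℝ) :
    HasDerivWithinAt (fun s => max (a - c * s) ρ) (if ρ < a - c * t then -c else 0) (Ici t) t := by
  split_ifs with h
  · have hlin : HasDerivAt (fun s => a - c * s) (-c) t := by
      simpa using ((hasDerivAt_id t).const_mul c).const_sub a
    have hev : (fun s => max (a - c * s) ρ) =ᶠ[𝓝 t] fun s => a - c * s := by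
      have : Continuous fun s : ℝ => a - c * s := by fun_prop
      filter_upwards [(this.tendsto t).eventually_const_lt h] with s hs
      exact max_eq_left hs.le
    exact (hlin.congr_of_eventuallyEq hev).hasDerivWithinAt
  · refine (hasDerivWithinAt_const t _ ρ).congr (fun s hs => ?_) (max_eq_right (not_lt.1 h))
    exact max_eq_right (by nlinarith [mem_Ici.1 hs, not_lt.1 h])

lemma abs_le_euclNorm {ι : Type*} [Fintype ι] (v : ι → ℝ) (i : ι) : |v i| ≤ euclNorm v := by
  rw [euclNorm, dotProduct, ← Real.sqrt_mul_self_eq_abs]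
  exact Real.sqrt_le_sqrt (Finset.single_le_sum (fun j _ => mul_self_nonneg (v j))
    (Finset.mem_univ i))

lemma euclNorm_le_of_forall_abs_le {ι : Type*} [Fintype ι] {v : ι → ℝ} {c : ℝ} (hc : 0 ≤ c)
    (h : ∀ i, |v i| ≤ c) : euclNorm v ≤ √(Fintype.card ι) * c := by
  rw [euclNorm, dotProduct, ← Real.sqrt_sq hc, ← Real.sqrt_mul (Nat.cast_nonneg _)]
  refine Real.sqrt_le_sqrt ?_
  calc ∑ j, v j * v j ≤ ∑ _j : ι, c ^ 2 := Finset.sum_le_sum fun j _ => by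
        rw [← sq, ← sq_abs]; exact pow_le_pow_left₀ (abs_nonneg _) (h j) 2
  _ = Fintype.card ι * c ^ 2 := by simp

def IsDiffusivelyCoupledSolution {ι : Type*} [Fintype ι] (g : ι → ℝ → ℝ) (γ : ℝ)
    (L : Matrix ι ι ℝ) (x : ℝ → ι → ℝ) : Prop :=
  ∀ t ∈ Ici (0 : ℝ), HasDerivWithinAt x (fun i => g i (x t i) - γ * L.mulVec (x t) i) (Ici 0) t

namespace IsDiffusivelyCoupledSolution

variable {ι : Type*} [Fintype ι] {g : ι → ℝ → ℝ} {γ : ℝ} {L : Matrix ι ι ℝ} {x : ℝ → ι → ℝ}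

lemma neg (hx : IsDiffusivelyCoupledSolution g γ L x) :
    IsDiffusivelyCoupledSolution (fun i s => -g i (-s)) γ L (-x) := by
  refine fun t ht => (hx t ht).neg.congr_deriv (funext fun i => ?_)
  simp [mulVec_neg]
  ring

lemma coord_le_of_barrier (hx : IsDiffusivelyCoupledSolution g γ L x) (hL : L.IsLaplacian)
    (hγ : 0 ≤ γ) {b : ℝ} {B B' : ℝ → ℝ} (hB : ContinuousOn B (Icc 0 b))
    (hB' : ∀ t ∈ Ico 0 b, HasDerivWithinAt B (B' t) (Ici t) t) (h0 : ∀ i, x 0 i ≤ B 0)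
    (hgB : ∀ t ∈ Ico 0 b, ∀ i, g i (B t) < B' t) : ∀ t ∈ Icc 0 b, ∀ i, x t i ≤ B t := by
  have hd := fun t ht i => hasDerivWithinAt_pi.1 (hx t ht) i
  refine forall_image_le_of_deriv_right_lt_deriv_boundary'
    (fun i t ht => (hd t ht.1 i).continuousWithinAt.mono Icc_subset_Ici_self)
    (fun t ht i => (hd t ht.1 i).mono (Ici_subset_Ici.2 ht.1)) h0 hB hB'
    fun t ht i hxi hmax => ?_
  rw [hxi]
  linarith [hgB t ht i, mul_nonneg hγ (hL.mulVec_apply_nonneg_of_forall_le hmax)]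

end IsDiffusivelyCoupledSolution

namespace Matrix.IsLaplacian

variable {ι : Type*} [Fintype ι] {L : Matrix ι ι ℝ} {g : ι → ℝ → ℝ} {ρ B₀ : ℝ}

theorem exists_forall_ge_solution_le (hL : L.IsLaplacian) (hg : ∀ i, Continuous (g i))
    (hneg : ∀ i s, ρ ≤ s → g i s < 0) (hρB : ρ ≤ B₀) :
    ∃ T ≥ 0, ∀ γ ≥ 0, ∀ x, IsDiffusivelyCoupledSolution g γ L x → (∀ i, x 0 i ≤ B₀) →
      ∀ t ≥ T, ∀ i, x t i ≤ ρ := by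
  obtain ⟨δ, hgδ, hδ⟩ : ∃ δ, (∀ i, ∀ s ∈ Icc ρ B₀, g i s ≤ -δ) ∧ 0 < δ :=
    ((eventually_all.2 fun i => isCompact_Icc.eventually_forall_le_neg (hg i).continuousOn
      fun s hs => hneg i s hs.1).and self_mem_nhdsWithin).exists
  set T := 2 * (B₀ - ρ) / δ
  set B : ℝ → ℝ := fun s => max (B₀ - δ / 2 * s) ρ
  have hT : 0 ≤ T := div_nonneg (by linarith) hδ.le
  refine ⟨T, hT, fun γ hγ x hx h0 t ht i => ?_⟩
  have hBt : B t = ρ := by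
    have : δ / 2 * T = B₀ - ρ := by simp only [T]; field_simp
    exact max_eq_right (by nlinarith)
  have hB_mem : ∀ s ≥ 0, B s ∈ Icc ρ B₀ := fun s hs =>
    ⟨le_max_right _ _, max_le (by nlinarith) hρB⟩
  rw [← hBt]
  refine hx.coord_le_of_barrier hL hγ (b := t) (by fun_prop)
    (fun s _ => hasDerivWithinAt_max_sub_mul_const (by positivity) s)
    (fun j => le_max_of_le_left (by simpa using h0 j)) (fun s hs j => ?_) t ⟨hT.trans ht, le_rfl⟩ i
  have := hgδ j (B s) (hB_mem s hs.1)
  split_ifs <;> linarith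

theorem exists_forall_ge_abs_solution_le (hL : L.IsLaplacian) (hg : ∀ i, Continuous (g i))
    (hneg : ∀ i s, ρ ≤ s → g i s < 0) (hpos : ∀ i s, s ≤ -ρ → 0 < g i s) (hρB : ρ ≤ B₀) :
    ∃ T ≥ 0, ∀ γ ≥ 0, ∀ x, IsDiffusivelyCoupledSolution g γ L x → (∀ i, |x 0 i| ≤ B₀) →
      ∀ t ≥ T, ∀ i, |x t i| ≤ ρ := by
  obtain ⟨T₁, hT₁, hup⟩ := hL.exists_forall_ge_solution_le hg hneg hρB
  obtain ⟨T₂, -, hlo⟩ := hL.exists_forall_ge_solution_le (g := fun i s => -g i (-s))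
    (fun i => ((hg i).comp continuous_neg).neg)
    (fun i s hs => neg_neg_of_pos (hpos i (-s) (neg_le_neg hs))) hρB
  refine ⟨max T₁ T₂, le_max_of_le_left hT₁, fun γ hγ x hx h0 t ht i => abs_le.2 ⟨?_, ?_⟩⟩
  · have := hlo γ hγ (-x) hx.neg (fun j => (neg_le_abs _).trans (h0 j)) t (le_of_max_le_right ht) i
    exact neg_le.1 this
  · exact hup γ hγ x hx (fun j => le_of_abs_le (h0 j)) t (le_of_max_le_left ht) i

end Matrix.IsLaplacian

theorem statement2_general {nl nf : ℕ} (hnl : 0 < nl)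
    (Lℓ : Matrix (Fin nl) (Fin nl) ℝ)
    (A : Matrix (Fin nf) (Fin nl) ℝ)
    (M : Matrix (Fin nf) (Fin nf) ℝ)
    (L : Matrix (Fin nl ⊕ Fin nf) (Fin nl ⊕ Fin nf) ℝ)
    (hblock : L = Matrix.fromBlocks Lℓ 0 (-A) M)
    (hLℓ : Lℓ.IsLaplacian)
    (hA : ∀ i j, 0 ≤ A i j) (hM : M.IsNonsingularMMatrix)
    (hrow : L.mulVec (fun _ => 1) = 0)
    (f : (Fin nl ⊕ Fin nf) → ℝ → ℝ) (hf : ∀ i, Continuous (f i))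
    -- state strict semipassivity of every node:
    (V' : (Fin nl ⊕ Fin nf) → ℝ → ℝ)
    (ρ : (Fin nl ⊕ Fin nf) → ℝ) (hρ : ∀ i, 0 < ρ i)
    (H : (Fin nl ⊕ Fin nf) → ℝ → ℝ)
    (ψ : (Fin nl ⊕ Fin nf) → ℝ → ℝ)
    (hψ_pos : ∀ i s, 0 ≤ s → 0 < ψ i s)
    (hdiss : ∀ i s u, V' i s * (f i s + u) ≤ 2 * u * s - H i s)
    (hHψ : ∀ i s, ρ i ≤ |s| → ψ i |s| ≤ H i s) :
    ∀ γ₀ > (0:ℝ), ∃ r > (0:ℝ), ∀ r₀ > (0:ℝ), ∃ T ≥ (0:ℝ), ∀ γ ≥ γ₀,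
      ∀ x : ℝ → ((Fin nl ⊕ Fin nf) → ℝ),
        (∀ t ∈ Set.Ici (0:ℝ),
          HasDerivWithinAt x (fun i => f i (x t i) - γ * L.mulVec (x t) i)
            (Set.Ici 0) t) →
        euclNorm (x 0) ≤ r₀ →
        ∀ t, T ≤ t → euclNorm (x t) ≤ r := by
  intro γ₀ hγ₀
  have hL : L.IsLaplacian := ⟨hblock ▸ fromBlocks_apply_nonpos_of_ne hLℓ.1 (fun _ _ => le_rfl)
    (fun i j => neg_nonpos.2 (hA i j)) hM.1, hrow⟩
  have : Nonempty (Fin nl ⊕ Fin nf) := ⟨.inl ⟨0, hnl⟩⟩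
  obtain ⟨R, hR⟩ := Finite.exists_le ρ
  have hRpos : 0 < R := (hρ (Classical.arbitrary _)).trans_le (hR _)
  have hsign : ∀ i s, R ≤ |s| → s * f i s < 0 := fun i s hs =>
    mul_neg_of_forall_mul_add_le (hdiss i s)
      ((hψ_pos i _ (abs_nonneg s)).trans_le (hHψ i s ((hR i).trans hs)))
  refine ⟨√(Fintype.card (Fin nl ⊕ Fin nf)) * R,
    mul_pos (Real.sqrt_pos.2 (Nat.cast_pos.2 Fintype.card_pos)) hRpos, fun r₀ _ => ?_⟩
  obtain ⟨T, hT, hbound⟩ := hL.exists_forall_ge_abs_solution_le hf (B₀ := max r₀ R)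
    (fun i s hs => neg_of_mul_neg_right (hsign i s (hs.trans (le_abs_self s))) (hRpos.le.trans hs))
    (fun i s hs => pos_of_mul_neg_right (hsign i s (le_neg.1 hs |>.trans (neg_le_abs s)))
      (by linarith))
    (le_max_right _ _)
  refine ⟨T, hT, fun γ hγ x hx h0 t ht => euclNorm_le_of_forall_abs_le hRpos.le ?_⟩
  exact hbound γ (hγ₀.le.trans hγ) x hx
    (fun i => ((abs_le_euclNorm _ i).trans h0).trans (le_max_left _ _)) t ht

/-- main theorem: Global uniform ultimate boundedness, uniformly in the
coupling gain `γ`, of the network `ẋ = F(x) − γ L x` of state strictly semipassive nodes,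
where (after relabeling, encoded by the index type `Fin nl ⊕ Fin nf`)
`L = [[Lℓ, 0], [−A, M]]` with `Lℓ` the Laplacian of a strongly connected digraph,
`A ≥ 0` entrywise, and `M` a nonsingular M-matrix. -/
theorem statement2 {nl nf : ℕ} (hnl : 0 < nl)
    (Lℓ : Matrix (Fin nl) (Fin nl) ℝ)
    (A : Matrix (Fin nf) (Fin nl) ℝ)
    (M : Matrix (Fin nf) (Fin nf) ℝ)
    (L : Matrix (Fin nl ⊕ Fin nf) (Fin nl ⊕ Fin nf) ℝ)
    (hblock : L = Matrix.fromBlocks Lℓ 0 (-A) M)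
    (hLℓ : Lℓ.IsLaplacian) (hSC : Lℓ.IsStronglyConnectedDigraph)
    (hA : ∀ i j, 0 ≤ A i j) (hM : M.IsNonsingularMMatrix)
    (hrow : L.mulVec (fun _ => 1) = 0)
    (f : (Fin nl ⊕ Fin nf) → ℝ → ℝ) (hf : ∀ i, Continuous (f i))
    -- state strict semipassivity of every node:
    (V : (Fin nl ⊕ Fin nf) → ℝ → ℝ) (V' : (Fin nl ⊕ Fin nf) → ℝ → ℝ)
    (hV_nonneg : ∀ i s, 0 ≤ V i s)
    (hV_deriv : ∀ i s, HasDerivAt (V i) (V' i s) s)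
    (hV'_cont : ∀ i, Continuous (V' i))
    (α : (Fin nl ⊕ Fin nf) → ℝ → ℝ) (hα : ∀ i, IsClassKInfty (α i))
    (hαV : ∀ i s, α i |s| ≤ V i s)
    (ρ : (Fin nl ⊕ Fin nf) → ℝ) (hρ : ∀ i, 0 < ρ i)
    (H : (Fin nl ⊕ Fin nf) → ℝ → ℝ) (hH : ∀ i, Continuous (H i))
    (ψ : (Fin nl ⊕ Fin nf) → ℝ → ℝ) (hψ_cont : ∀ i, Continuous (ψ i))
    (hψ_pos : ∀ i s, 0 ≤ s → 0 < ψ i s)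
    (hdiss : ∀ i s u, V' i s * (f i s + u) ≤ 2 * u * s - H i s)
    (hHψ : ∀ i s, ρ i ≤ |s| → ψ i |s| ≤ H i s) :
    ∀ γ₀ > (0:ℝ), ∃ r > (0:ℝ), ∀ r₀ > (0:ℝ), ∃ T ≥ (0:ℝ), ∀ γ ≥ γ₀,
      ∀ x : ℝ → ((Fin nl ⊕ Fin nf) → ℝ),
        (∀ t ∈ Set.Ici (0:ℝ),
          HasDerivWithinAt x (fun i => f i (x t i) - γ * L.mulVec (x t) i)
            (Set.Ici 0) t) →
        euclNorm (x 0) ≤ r₀ →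
        ∀ t, T ≤ t → euclNorm (x t) ≤ r :=
  statement2_general hnl Lℓ A M L hblock hLℓ hA hM hrow f hf V' ρ hρ H ψ hψ_pos hdiss hHψ
end
end

section
/- Under the same hypotheses as the main theorem (closed loop ẋ = F(x) − γ L x, with L block lower-triangular L = [[L_ℓ, 0], [−A, M]], L_ℓ the Laplacian of a strongly connected weighted digraph, A entrywise nonnegative, M a nonsingular M-matrix, L 1ₙ = 0, and each node state strictly semipassive with storage functions Vᵢ bounded below by class 𝒦∞ functions α̲ᵢ and dissipation rates Hᵢ, ψᵢ, ρᵢ), the solutions are globally uniformly bounded, uniformly in γ: for every r₀ > 0 and γ₀ > 0 there exists R ≥ r₀ such that for every γ ≥ γ₀ and every differentiable x : [0, ∞) → ℝⁿ satisfying ẋ(t) = F(x(t)) − γ L x(t) for all t ≥ 0 and |x(0)| ≤ r₀, one has |x(t)| ≤ R for all t ≥ 0. -/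
/-!
Since the dissipation inequality holds for every input `u`, it forces `V'ᵢ(s) = 2s`, and then
`s fᵢ(s) ≤ -Hᵢ(s) < 0` whenever `|s| ≥ ρᵢ`. A matrix with nonpositive off-diagonal entries and
zero row sums satisfies `(L x)ᵢ ≥ 0` at a largest component `xᵢ` of `x`, so the coupling
`-γ L x` never pushes the largest component up. Hence, with `B = max r₀ maxᵢ ρᵢ`, a component
reaching a maximum above `B` would have negative derivative there: every component stays in
`[-B, B]` for every `γ ≥ 0`, and `|x(t)| ≤ √n B`.
-/

open Matrix Filter Set

noncomputable section

lemma eq_zero_of_forall_mul_le_s3 {a b : ℝ} (h : ∀ u : ℝ, a * u ≤ b) : a = 0 := by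
  by_contra ha
  have h1 := h ((b + 1) / a)
  rw [mul_div_cancel₀ _ ha] at h1
  linarith

lemma two_mul_mul_le_neg_of_forall_dissipation {s y v k : ℝ}
    (h : ∀ u : ℝ, v * (y + u) ≤ 2 * u * s - k) : 2 * s * y ≤ -k := by
  have hv : v - 2 * s = 0 :=
    eq_zero_of_forall_mul_le_s3 (b := -k - v * y) fun u => by linarith [h u]
  have h0 := h 0
  rw [show v = 2 * s by linarith] at h0
  linarith

lemma Matrix.isLaplacian_fromBlocks {m n : Type*} [Fintype m] [Fintype n]
    {Lℓ : Matrix m m ℝ} {A : Matrix n m ℝ} {M : Matrix n n ℝ}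
    (hLℓ : ∀ i j, i ≠ j → Lℓ i j ≤ 0) (hA : ∀ i j, 0 ≤ A i j) (hM : ∀ i j, i ≠ j → M i j ≤ 0)
    (hrow : (fromBlocks Lℓ 0 (-A) M) *ᵥ (fun _ => 1) = 0) :
    (fromBlocks Lℓ 0 (-A) M).IsLaplacian := by
  refine ⟨?_, hrow⟩
  rintro (i | i) (j | j) hij
  · exact hLℓ i j (by simpa using hij)
  · simp
  · simpa using hA i j
  · exact hM i j (by simpa using hij)

lemma HasDerivWithinAt.nonneg_of_isMaxOn_Icc {g : ℝ → ℝ} {g' a b : ℝ} (hab : a < b)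
    (hg : HasDerivWithinAt g g' (Icc a b) b) (hmax : IsMaxOn g (Icc a b) b) : 0 ≤ g' := by
  have hcone : a - b ∈ posTangentConeAt (Icc a b) b :=
    sub_mem_posTangentConeAt_of_segment_subset (segment_symm ℝ a b ▸ segment_subset_Icc hab.le)
  have h := hmax.localize.hasFDerivWithinAt_nonpos hg.hasFDerivWithinAt hcone
  rw [ContinuousLinearMap.toSpanSingleton_apply, smul_eq_mul] at h
  exact nonneg_of_mul_nonpos_right h (sub_neg.2 hab)

section

variable {ι : Type*} [Fintype ι]

lemma Matrix.IsLaplacian.mulVec_apply_nonneg {L : Matrix ι ι ℝ}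
    (hL : L.IsLaplacian) {x : ι → ℝ} {i : ι} (hmax : ∀ j, x j ≤ x i) :
    0 ≤ (L *ᵥ x) i := by
  have hrow : ∑ j, L i j = 0 := by
    simpa [Matrix.mulVec, dotProduct] using congrFun hL.2 i
  have hsum : (L *ᵥ x) i = ∑ j, L i j * (x j - x i) := by
    simp only [Matrix.mulVec, dotProduct, mul_sub, Finset.sum_sub_distrib, ← Finset.sum_mul,
      hrow, zero_mul, sub_zero]
  rw [hsum]
  refine Finset.sum_nonneg fun j _ => ?_
  rcases eq_or_ne i j with rfl | hij
  · simp
  · exact mul_nonneg_of_nonpos_of_nonpos (hL.1 i j hij) (sub_nonpos.2 (hmax j))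

lemma Matrix.IsLaplacian.apply_le_of_hasDerivWithinAt
    {L : Matrix ι ι ℝ} (hL : L.IsLaplacian) {f : ι → ℝ → ℝ} {γ B : ℝ} (hγ : 0 ≤ γ)
    (hfB : ∀ i s, B < s → f i s < 0) {x : ℝ → ι → ℝ}
    (hx : ∀ t ∈ Ici (0:ℝ), HasDerivWithinAt x (fun i => f i (x t i) - γ * (L *ᵥ x t) i)
      (Ici 0) t)
    (hx0 : ∀ i, x 0 i ≤ B) (t : ℝ) (ht : 0 ≤ t) (i : ι) : x t i ≤ B := by
  by_contra! hti
  have hne : (Finset.univ : Finset ι).Nonempty := ⟨i, Finset.mem_univ i⟩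
  set m : ℝ → ℝ := fun s => Finset.univ.sup' hne (x s)
  have hxm : ∀ s j, x s j ≤ m s := fun s j => Finset.le_sup' (x s) (Finset.mem_univ j)
  have hm : ContinuousOn m (Icc 0 t) :=
    ContinuousOn.finset_sup'_apply hne fun j _ => (continuous_apply j).comp_continuousOn
      fun s hs => (hx s hs.1).continuousWithinAt.mono Icc_subset_Ici_self
  -- `k` is a largest component at a time `T` maximising the largest component over `[0, t]`
  obtain ⟨T, hT, hTmax⟩ := isCompact_Icc.exists_isMaxOn (nonempty_Icc.2 ht) hm
  obtain ⟨k, -, hk⟩ : ∃ k ∈ Finset.univ, m T = x T k := Finset.exists_mem_eq_sup' hne (x T)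
  have hBk : B < x T k := hti.trans_le ((hxm t i).trans ((hTmax ⟨ht, le_rfl⟩).trans_eq hk))
  have hT0 : 0 < T := lt_of_le_of_ne hT.1 fun h => (hx0 k).not_gt (h ▸ hBk)
  have hkmax : IsMaxOn (fun s => x s k) (Icc 0 T) T := fun s hs =>
    (hxm s k).trans ((hTmax ⟨hs.1, hs.2.trans hT.2⟩).trans_eq hk)
  have hderiv : 0 ≤ f k (x T k) - γ * (L *ᵥ x T) k :=
    (hasDerivWithinAt_pi.1 ((hx T hT.1).mono Icc_subset_Ici_self) k).nonneg_of_isMaxOn_Icc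
      hT0 hkmax
  have hLx : 0 ≤ (L *ᵥ x T) k := hL.mulVec_apply_nonneg fun j => (hxm T j).trans_eq hk
  linarith [mul_nonneg hγ hLx, hfB k _ hBk]

lemma Matrix.IsLaplacian.abs_apply_le_of_hasDerivWithinAt
    {L : Matrix ι ι ℝ} (hL : L.IsLaplacian) {f : ι → ℝ → ℝ} {γ B : ℝ} (hγ : 0 ≤ γ)
    (hfB : ∀ i s, B < |s| → s * f i s < 0) {x : ℝ → ι → ℝ}
    (hx : ∀ t ∈ Ici (0:ℝ), HasDerivWithinAt x (fun i => f i (x t i) - γ * (L *ᵥ x t) i)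
      (Ici 0) t)
    (hx0 : ∀ i, |x 0 i| ≤ B) (t : ℝ) (ht : 0 ≤ t) (i : ι) : |x t i| ≤ B := by
  have hupper := hL.apply_le_of_hasDerivWithinAt hγ
    (fun i s hs => neg_of_mul_neg_right (hfB i s (hs.trans_le (le_abs_self s)))
      (hs.le.trans' ((abs_nonneg _).trans (hx0 i))))
    hx (fun i => (le_abs_self _).trans (hx0 i)) t ht i
  -- the reflected trajectory `-x` solves the system with vector field `s ↦ -f(-s)`
  have hlower := hL.apply_le_of_hasDerivWithinAt (f := fun i s => -f i (-s)) (x := (-x ·)) hγ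
    (fun i s hs => neg_neg_of_pos (pos_of_mul_neg_right
      (hfB i (-s) (by rwa [abs_neg, abs_of_pos ((abs_nonneg _).trans (hx0 i) |>.trans_lt hs)]))
      (by linarith [(abs_nonneg _).trans (hx0 i)])))
    (fun t ht => (hx t ht).neg.congr_deriv (by ext j; simp [Matrix.mulVec_neg]; ring))
    (fun i => (neg_le_abs _).trans (hx0 i)) t ht i
  exact abs_le.2 ⟨neg_le.1 hlower, hupper⟩

lemma abs_apply_le_euclNorm (v : ι → ℝ) (i : ι) : |v i| ≤ euclNorm v := by
  rw [euclNorm, ← Real.sqrt_mul_self (abs_nonneg (v i)), abs_mul_abs_self]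
  exact Real.sqrt_le_sqrt <| Finset.single_le_sum (f := fun j => v j * v j)
    (fun j _ => mul_self_nonneg (v j)) (Finset.mem_univ i)

lemma euclNorm_le_of_forall_abs_le_s3 {v : ι → ℝ} {B : ℝ} (hB : 0 ≤ B)
    (hv : ∀ i, |v i| ≤ B) : euclNorm v ≤ Real.sqrt (Fintype.card ι) * B := by
  have hsum : v ⬝ᵥ v ≤ Fintype.card ι * (B * B) := by
    calc v ⬝ᵥ v = ∑ i, |v i| * |v i| := by simp [dotProduct, abs_mul_abs_self]
      _ ≤ ∑ _i : ι, B * B :=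
          Finset.sum_le_sum fun i _ => mul_self_le_mul_self (abs_nonneg _) (hv i)
      _ = Fintype.card ι * (B * B) := by simp
  calc euclNorm v ≤ Real.sqrt (Fintype.card ι * (B * B)) := Real.sqrt_le_sqrt hsum
    _ = Real.sqrt (Fintype.card ι) * B := by
      rw [Real.sqrt_mul (Nat.cast_nonneg _), Real.sqrt_mul_self hB]

end

theorem statement3_general {nl nf : ℕ}
    (Lℓ : Matrix (Fin nl) (Fin nl) ℝ)
    (A : Matrix (Fin nf) (Fin nl) ℝ)
    (M : Matrix (Fin nf) (Fin nf) ℝ)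
    (L : Matrix (Fin nl ⊕ Fin nf) (Fin nl ⊕ Fin nf) ℝ)
    (hblock : L = Matrix.fromBlocks Lℓ 0 (-A) M)
    (hLℓ : Lℓ.IsLaplacian)
    (hA : ∀ i j, 0 ≤ A i j) (hM : M.IsNonsingularMMatrix)
    (hrow : L.mulVec (fun _ => 1) = 0)
    (f : (Fin nl ⊕ Fin nf) → ℝ → ℝ)
    -- state strict semipassivity of every node:
    (V' : (Fin nl ⊕ Fin nf) → ℝ → ℝ)
    (ρ : (Fin nl ⊕ Fin nf) → ℝ)
    (H : (Fin nl ⊕ Fin nf) → ℝ → ℝ)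
    (ψ : (Fin nl ⊕ Fin nf) → ℝ → ℝ)
    (hψ_pos : ∀ i s, 0 ≤ s → 0 < ψ i s)
    (hdiss : ∀ i s u, V' i s * (f i s + u) ≤ 2 * u * s - H i s)
    (hHψ : ∀ i s, ρ i ≤ |s| → ψ i |s| ≤ H i s) :
    ∀ r₀ > (0:ℝ), ∀ γ₀ > (0:ℝ), ∃ R ≥ r₀, ∀ γ ≥ γ₀,
      ∀ x : ℝ → ((Fin nl ⊕ Fin nf) → ℝ),
        (∀ t ∈ Set.Ici (0:ℝ),
          HasDerivWithinAt x (fun i => f i (x t i) - γ * L.mulVec (x t) i)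
            (Set.Ici 0) t) →
        euclNorm (x 0) ≤ r₀ →
        ∀ t, (0:ℝ) ≤ t → euclNorm (x t) ≤ R := by
  intro r₀ hr₀ γ₀ hγ₀
  subst hblock
  have hL := Matrix.isLaplacian_fromBlocks hLℓ.1 hA hM.1 hrow
  set B := max r₀ (⨆ i, ρ i)
  have hρB : ∀ i, ρ i ≤ B := fun i =>
    (le_ciSup (Set.finite_range ρ).bddAbove i).trans (le_max_right _ _)
  have hsign : ∀ i s, B < |s| → s * f i s < 0 := fun i s hs => by
    have hdiss_s := two_mul_mul_le_neg_of_forall_dissipation (hdiss i s)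
    have hHψ_s := hHψ i s ((hρB i).trans hs.le)
    have hψ_s := hψ_pos i |s| (abs_nonneg s)
    linarith
  refine ⟨max r₀ (√(Fintype.card (Fin nl ⊕ Fin nf)) * B), le_max_left _ _,
    fun γ hγ x hx hx0 t ht => ?_⟩
  have hx0B : ∀ i, |x 0 i| ≤ B := fun i =>
    (abs_apply_le_euclNorm _ i).trans (hx0.trans (le_max_left _ _))
  refine le_max_of_le_right (euclNorm_le_of_forall_abs_le_s3 (hr₀.le.trans (le_max_left _ _))
    fun i => ?_)
  exact hL.abs_apply_le_of_hasDerivWithinAt (hγ₀.le.trans hγ) hsign hx hx0B t ht i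

/-- Global uniform boundedness, uniformly in the
coupling gain `γ`, of the network `ẋ = F(x) − γ L x` of state strictly semipassive nodes,
where (after relabeling, encoded by the index type `Fin nl ⊕ Fin nf`)
`L = [[Lℓ, 0], [−A, M]]` with `Lℓ` the Laplacian of a strongly connected digraph,
`A ≥ 0` entrywise, and `M` a nonsingular M-matrix. -/
theorem statement3 {nl nf : ℕ} (hnl : 0 < nl)
    (Lℓ : Matrix (Fin nl) (Fin nl) ℝ)
    (A : Matrix (Fin nf) (Fin nl) ℝ)
    (M : Matrix (Fin nf) (Fin nf) ℝ)
    (L : Matrix (Fin nl ⊕ Fin nf) (Fin nl ⊕ Fin nf) ℝ)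
    (hblock : L = Matrix.fromBlocks Lℓ 0 (-A) M)
    (hLℓ : Lℓ.IsLaplacian) (hSC : Lℓ.IsStronglyConnectedDigraph)
    (hA : ∀ i j, 0 ≤ A i j) (hM : M.IsNonsingularMMatrix)
    (hrow : L.mulVec (fun _ => 1) = 0)
    (f : (Fin nl ⊕ Fin nf) → ℝ → ℝ) (hf : ∀ i, Continuous (f i))
    -- state strict semipassivity of every node:
    (V : (Fin nl ⊕ Fin nf) → ℝ → ℝ) (V' : (Fin nl ⊕ Fin nf) → ℝ → ℝ)
    (hV_nonneg : ∀ i s, 0 ≤ V i s)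
    (hV_deriv : ∀ i s, HasDerivAt (V i) (V' i s) s)
    (hV'_cont : ∀ i, Continuous (V' i))
    (α : (Fin nl ⊕ Fin nf) → ℝ → ℝ) (hα : ∀ i, IsClassKInfty (α i))
    (hαV : ∀ i s, α i |s| ≤ V i s)
    (ρ : (Fin nl ⊕ Fin nf) → ℝ) (hρ : ∀ i, 0 < ρ i)
    (H : (Fin nl ⊕ Fin nf) → ℝ → ℝ) (hH : ∀ i, Continuous (H i))
    (ψ : (Fin nl ⊕ Fin nf) → ℝ → ℝ) (hψ_cont : ∀ i, Continuous (ψ i))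
    (hψ_pos : ∀ i s, 0 ≤ s → 0 < ψ i s)
    (hdiss : ∀ i s u, V' i s * (f i s + u) ≤ 2 * u * s - H i s)
    (hHψ : ∀ i s, ρ i ≤ |s| → ψ i |s| ≤ H i s) :
    ∀ r₀ > (0:ℝ), ∀ γ₀ > (0:ℝ), ∃ R ≥ r₀, ∀ γ ≥ γ₀,
      ∀ x : ℝ → ((Fin nl ⊕ Fin nf) → ℝ),
        (∀ t ∈ Set.Ici (0:ℝ),
          HasDerivWithinAt x (fun i => f i (x t i) - γ * L.mulVec (x t) i)
            (Set.Ici 0) t) →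
        euclNorm (x 0) ≤ r₀ →
        ∀ t, (0:ℝ) ≤ t → euclNorm (x t) ≤ R :=
  statement3_general Lℓ A M L hblock hLℓ hA hM hrow f V' ρ H ψ hψ_pos hdiss hHψ
end
end

section
/- Let L ∈ ℝ^{n×n} be the Laplacian matrix of a strongly connected weighted digraph. Then the consensus subspace 𝒜 := span(1ₙ) is globally uniformly exponentially stable for the linear system ẋ = −L x: there exist constants C ≥ 1 and λ > 0 such that every differentiable x : [0, ∞) → ℝⁿ satisfying ẋ(t) = −L x(t) for all t ≥ 0 obeys dist(x(t), 𝒜) ≤ C e^{−λ t} dist(x(0), 𝒜) for all t ≥ 0. -/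
open Matrix Filter Set

noncomputable section

/-- Euclidean distance from `y` to the consensus subspace `𝒜 = span(1ₙ)`,
`dist(y, 𝒜) = ‖y − (1ᵀy/n) 1‖`. -/
def distToConsensus {n : ℕ} (y : Fin n → ℝ) : ℝ :=
  euclNorm (fun i => y i - (∑ j, y j) / n)

/-!
For `t ≥ 0` the flow `exp (t • -L)` is a stochastic matrix: `-L` is a Metzler matrix, so its
exponential is entrywise nonnegative, and `-L 1 = 0` gives row sums `1`. Strong connectivity makes
`exp (-L)` entrywise positive, since the exponential of a nonnegative matrix dominates each of its
powers, and a power has a positive `(i, j)` entry as soon as there is a path from `i` to `j`.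
A stochastic matrix does not increase the oscillation `max v - min v` of a vector, and one whose
entries are all `≥ δ` multiplies it by at most `1 - n δ`. So the oscillation of a solution decays
geometrically over unit time steps, and the oscillation is within a factor `2` and `√n` of the
distance to the consensus line.
-/

open NormedSpace Finset

attribute [local instance] Matrix.linftyOpNormedRing Matrix.linftyOpNormedAlgebra

theorem le_inv_mul_exp_log_mul_of_antitoneOn {f : ℝ → ℝ} {q : ℝ} (hq0 : 0 < q) (hq1 : q ≤ 1)
    (hanti : AntitoneOn f (Ici 0)) (hstep : ∀ s, 0 ≤ s → f (s + 1) ≤ q * f s) (hf0 : 0 ≤ f 0)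
    {t : ℝ} (ht : 0 ≤ t) : f t ≤ q⁻¹ * Real.exp (Real.log q * t) * f 0 := by
  have hpow : ∀ k : ℕ, f k ≤ q ^ k * f 0 := by
    intro k
    induction k with
    | zero => simp
    | succ k ih =>
      calc f (k + 1 : ℕ) = f (k + 1) := by push_cast; rfl
        _ ≤ q * f k := hstep k k.cast_nonneg
        _ ≤ q * (q ^ k * f 0) := by gcongr
        _ = q ^ (k + 1) * f 0 := by ring
  have hfloor : (⌊t⌋₊ : ℝ) ≤ t := Nat.floor_le ht
  have hqpow : q ^ ⌊t⌋₊ ≤ q⁻¹ * Real.exp (Real.log q * t) :=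
    calc q ^ ⌊t⌋₊ = q ^ (⌊t⌋₊ : ℝ) := (Real.rpow_natCast q _).symm
      _ ≤ q ^ (t - 1) :=
        Real.rpow_le_rpow_of_exponent_ge hq0 hq1 (by linarith [Nat.lt_floor_add_one t])
      _ = q⁻¹ * Real.exp (Real.log q * t) := by
        rw [Real.rpow_sub_one hq0.ne', Real.rpow_def_of_pos hq0, div_eq_inv_mul]
  calc f t ≤ f ⌊t⌋₊ := hanti (mem_Ici.2 (Nat.cast_nonneg _)) ht hfloor
    _ ≤ q ^ ⌊t⌋₊ * f 0 := hpow _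
    _ ≤ q⁻¹ * Real.exp (Real.log q * t) * f 0 := by gcongr

section Oscillation

variable {ι : Type*} [Fintype ι] [Nonempty ι]

def osc (v : ι → ℝ) : ℝ :=
  univ.sup' univ_nonempty v - univ.inf' univ_nonempty v

theorem osc_nonneg (v : ι → ℝ) : 0 ≤ osc v := by
  obtain ⟨i⟩ := ‹Nonempty ι›
  exact sub_nonneg.2 ((inf'_le v (mem_univ i)).trans (le_sup' v (mem_univ i)))

theorem osc_le_of_forall_mem_Icc {v : ι → ℝ} {a b : ℝ} (h : ∀ i, v i ∈ Icc a b) :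
    osc v ≤ b - a :=
  sub_le_sub (sup'_le _ _ fun i _ => (h i).2) (le_inf' _ _ fun i _ => (h i).1)

theorem abs_sub_le_osc_of_mem_Icc {v : ι → ℝ} {a : ℝ} (i : ι)
    (ha : a ∈ Icc (univ.inf' univ_nonempty v) (univ.sup' univ_nonempty v)) :
    |v i - a| ≤ osc v := by
  have hlow := inf'_le v (mem_univ i)
  have hup := le_sup' v (mem_univ i)
  rw [abs_le, osc]
  constructor <;> linarith [ha.1, ha.2]

variable {A : Matrix ι ι ℝ}

theorem mulVec_apply_mem_Icc {s : ℝ} (hA : ∀ i j, 0 ≤ A i j) (hrow : ∀ i, ∑ j, A i j = s)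
    (v : ι → ℝ) (i : ι) :
    (A *ᵥ v) i ∈ Icc (s * univ.inf' univ_nonempty v) (s * univ.sup' univ_nonempty v) := by
  simp only [mulVec, dotProduct, ← hrow i, sum_mul]
  constructor <;> gcongr with j _ <;> first
    | exact hA i j | exact inf'_le v (mem_univ j) | exact le_sup' v (mem_univ j)

theorem osc_mulVec_le {s : ℝ} (hA : ∀ i j, 0 ≤ A i j) (hrow : ∀ i, ∑ j, A i j = s)
    (v : ι → ℝ) : osc (A *ᵥ v) ≤ s * osc v :=
  (osc_le_of_forall_mem_Icc (mulVec_apply_mem_Icc hA hrow v)).trans_eq (by rw [osc, mul_sub])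

/-- Splitting off `δ` times the all-ones matrix leaves a nonnegative matrix with row sums
`1 - n δ`, and the split-off part only shifts `A v` by a constant vector. -/
theorem osc_mulVec_le_of_le_apply {δ : ℝ} (hδ : ∀ i j, δ ≤ A i j) (hrow : ∀ i, ∑ j, A i j = 1)
    (v : ι → ℝ) : osc (A *ᵥ v) ≤ (1 - Fintype.card ι * δ) * osc v := by
  set B : Matrix ι ι ℝ := A - of fun _ _ => δ
  have hB : ∀ i j, 0 ≤ B i j := fun i j => sub_nonneg.2 (hδ i j)
  have hrowB : ∀ i, ∑ j, B i j = 1 - Fintype.card ι * δ := fun i => by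
    simp [B, sum_sub_distrib, hrow i]
  have hsplit : ∀ i, (A *ᵥ v) i = (B *ᵥ v) i + δ * ∑ j, v j := fun i => by
    simp [B, mulVec, dotProduct, sub_mul, sum_sub_distrib, mul_sum]
  set c := δ * ∑ j, v j
  refine (osc_le_of_forall_mem_Icc (a := (1 - Fintype.card ι * δ) * univ.inf' univ_nonempty v + c)
    (b := (1 - Fintype.card ι * δ) * univ.sup' univ_nonempty v + c) fun i => ?_).trans_eq ?_
  · obtain ⟨h₁, h₂⟩ := mulVec_apply_mem_Icc hB hrowB v i
    rw [hsplit]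
    exact ⟨by linarith, by linarith⟩
  · rw [osc]; ring

theorem exists_osc_mulVec_le_of_pos (hA : ∀ i j, 0 < A i j) (hrow : ∀ i, ∑ j, A i j = 1) :
    ∃ q, 0 < q ∧ q < 1 ∧ ∀ v, osc (A *ᵥ v) ≤ q * osc v := by
  obtain ⟨p, hp⟩ := Finite.exists_min fun p : ι × ι => A p.1 p.2
  have hpos : 0 < Fintype.card ι * A p.1 p.2 := mul_pos (by simp [Fintype.card_pos]) (hA _ _)
  -- `1 - n δ` may vanish, and the decay rate `-log q` needs `q > 0`
  refine ⟨max (1 - Fintype.card ι * A p.1 p.2) (1 / 2), by positivity,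
    max_lt (by linarith) (by norm_num), fun v => ?_⟩
  calc osc (A *ᵥ v) ≤ (1 - Fintype.card ι * A p.1 p.2) * osc v :=
        osc_mulVec_le_of_le_apply (fun i j => hp (i, j)) hrow v
    _ ≤ _ := by gcongr; exacts [osc_nonneg v, le_max_left _ _]

end Oscillation

namespace Matrix

def IsMetzler {ι : Type*} (M : Matrix ι ι ℝ) : Prop :=
  ∀ i j, i ≠ j → 0 ≤ M i j

variable {ι : Type*} [Fintype ι] [DecidableEq ι]

theorem exists_pow_apply_pos_of_reflTransGen {B : Matrix ι ι ℝ} (hB : ∀ i j, 0 ≤ B i j) {i j : ι}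
    (h : Relation.ReflTransGen (fun a b => 0 < B a b) i j) : ∃ k : ℕ, 0 < (B ^ k) i j := by
  induction h with
  | refl => exact ⟨0, by simp⟩
  | @tail b c _ hbc ih =>
    obtain ⟨k, hk⟩ := ih
    refine ⟨k + 1, ?_⟩
    rw [pow_succ, mul_apply]
    exact (mul_pos hk hbc).trans_le <| single_le_sum (f := fun l => (B ^ k) i l * B l c)
      (fun l _ => mul_nonneg (pow_apply_nonneg hB k i l) (hB l c)) (mem_univ b)

theorem hasSum_exp_apply (B : Matrix ι ι ℝ) (i j : ι) :
    HasSum (fun k : ℕ => (k.factorial⁻¹ : ℝ) * (B ^ k) i j) (exp B i j) :=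
  Pi.hasSum.1 (Pi.hasSum.1 (exp_series_hasSum_exp' (𝕂 := ℝ) B) i) j

theorem exp_apply_nonneg_of_nonneg {B : Matrix ι ι ℝ} (hB : ∀ i j, 0 ≤ B i j) (i j : ι) :
    0 ≤ exp B i j :=
  (hasSum_exp_apply B i j).nonneg fun k => mul_nonneg (by positivity) (pow_apply_nonneg hB k i j)

theorem exp_apply_pos_of_nonneg {B : Matrix ι ι ℝ} (hB : ∀ i j, 0 ≤ B i j) {k : ℕ} {i j : ι}
    (hk : 0 < (B ^ k) i j) : 0 < exp B i j := by
  rw [← (hasSum_exp_apply B i j).tsum_eq]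
  exact (hasSum_exp_apply B i j).summable.tsum_pos
    (fun k => mul_nonneg (by positivity) (pow_apply_nonneg hB k i j)) k (mul_pos (by positivity) hk)

theorem exp_add_smul_one (M : Matrix ι ι ℝ) (c : ℝ) :
    exp (M + c • 1) = Real.exp c • exp M := by
  have hscalar : exp (c • (1 : Matrix ι ι ℝ)) = Real.exp c • 1 := by
    rw [← Algebra.algebraMap_eq_smul_one, ← Algebra.algebraMap_eq_smul_one, Real.exp_eq_exp_ℝ]
    exact (algebraMap_exp_comm c).symm
  rw [exp_add_of_commute _ _ ((Commute.one_right M).smul_right c), hscalar, mul_smul_one]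

namespace IsMetzler

variable {M : Matrix ι ι ℝ}

theorem exists_nonneg_exp_eq_smul_exp (hM : M.IsMetzler) :
    ∃ (B : Matrix ι ι ℝ) (c : ℝ), (∀ i j, 0 ≤ B i j ∧ M i j ≤ B i j) ∧
      exp M = Real.exp c • exp B := by
  set c := ∑ i, |M i i|
  refine ⟨M + c • 1, -c, fun i j => ?_, ?_⟩
  · by_cases h : i = j
    · subst h
      have := single_le_sum (f := fun i => |M i i|) (fun i _ => abs_nonneg _) (mem_univ i)
      simp only [add_apply, smul_apply, one_apply_eq, smul_eq_mul, mul_one]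
      constructor <;> linarith [neg_abs_le (M i i), abs_nonneg (M i i)]
    · simp [h, hM i j h]
  · rw [← exp_add_smul_one, add_assoc, ← add_smul, add_neg_cancel, zero_smul, add_zero]

theorem exp_apply_nonneg (hM : M.IsMetzler) (i j : ι) : 0 ≤ exp M i j := by
  obtain ⟨B, c, hB, hexp⟩ := hM.exists_nonneg_exp_eq_smul_exp
  rw [hexp, smul_apply, smul_eq_mul]
  exact mul_nonneg (Real.exp_nonneg _) (exp_apply_nonneg_of_nonneg (fun i j => (hB i j).1) i j)

theorem exp_apply_pos (hM : M.IsMetzler) {i j : ι}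
    (h : Relation.ReflTransGen (fun a b => 0 < M a b) i j) : 0 < exp M i j := by
  obtain ⟨B, c, hB, hexp⟩ := hM.exists_nonneg_exp_eq_smul_exp
  obtain ⟨k, hk⟩ := exists_pow_apply_pos_of_reflTransGen (fun i j => (hB i j).1)
    (Relation.ReflTransGen.mono (fun a b hab => hab.trans_le (hB a b).2) _ _ h)
  rw [hexp, smul_apply, smul_eq_mul]
  exact mul_pos (Real.exp_pos _) (exp_apply_pos_of_nonneg (fun i j => (hB i j).1) hk)

end IsMetzler

theorem hasDerivAt_exp_smul_mulVec (M : Matrix ι ι ℝ) (v : ι → ℝ) (t : ℝ) :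
    HasDerivAt (fun t : ℝ => exp (t • M) *ᵥ v) (M *ᵥ (exp (t • M) *ᵥ v)) t := by
  let evalAt : Matrix ι ι ℝ →L[ℝ] ι → ℝ := LinearMap.toContinuousLinearMap
    { toFun := fun A => A *ᵥ v
      map_add' := fun A B => add_mulVec A B v
      map_smul' := fun c A => smul_mulVec c A v }
  rw [mulVec_mulVec]
  exact evalAt.hasFDerivAt.comp_hasDerivAt t (hasDerivAt_exp_smul_const' (𝕂 := ℝ) M t)

theorem eq_exp_smul_mulVec_of_hasDerivWithinAt {M : Matrix ι ι ℝ} {x : ℝ → ι → ℝ}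
    (hx : ∀ t ∈ Ici (0 : ℝ), HasDerivWithinAt x (M *ᵥ x t) (Ici 0) t) {t : ℝ} (ht : 0 ≤ t) :
    x t = exp (t • M) *ᵥ x 0 := by
  let field : (ι → ℝ) →L[ℝ] ι → ℝ := LinearMap.toContinuousLinearMap (toLin' M)
  refine ODE_solution_unique (v := fun _ => field) (fun _ => field.lipschitz)
    (fun s hs => (hx s hs.1).continuousWithinAt.mono Icc_subset_Ici_self)
    (fun s hs => (hx s hs.1).mono (Ici_subset_Ici.2 hs.1))
    (fun s _ => (hasDerivAt_exp_smul_mulVec M (x 0) s).continuousAt.continuousWithinAt)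
    (fun s _ => (hasDerivAt_exp_smul_mulVec M (x 0) s).hasDerivWithinAt)
    (by simp) ⟨ht, le_rfl⟩

theorem eq_exp_sub_smul_mulVec_of_hasDerivWithinAt {M : Matrix ι ι ℝ} {x : ℝ → ι → ℝ}
    (hx : ∀ t ∈ Ici (0 : ℝ), HasDerivWithinAt x (M *ᵥ x t) (Ici 0) t) {s t : ℝ} (hs : 0 ≤ s)
    (hst : s ≤ t) : x t = exp ((t - s) • M) *ᵥ x s := by
  have hcomm : Commute ((t - s) • M) (s • M) := ((Commute.refl M).smul_left _).smul_right _
  rw [eq_exp_smul_mulVec_of_hasDerivWithinAt hx hs, mulVec_mulVec, ← exp_add_of_commute _ _ hcomm,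
    ← add_smul, sub_add_cancel, eq_exp_smul_mulVec_of_hasDerivWithinAt hx (hs.trans hst)]

end Matrix

namespace Matrix.IsLaplacian

variable {ι : Type*} [Fintype ι] {L : Matrix ι ι ℝ}

theorem isMetzler_smul_neg (hL : L.IsLaplacian) {t : ℝ} (ht : 0 ≤ t) : (t • -L).IsMetzler :=
  fun i j hij => by simpa using mul_nonneg ht (neg_nonneg.2 (hL.1 i j hij))

variable [DecidableEq ι]

theorem sum_exp_smul_neg_apply (hL : L.IsLaplacian) {t : ℝ} (ht : 0 ≤ t) (i : ι) :
    ∑ j, exp (t • -L) i j = 1 := by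
  -- the constant vector `1` solves `ẋ = -L x`
  have hconst : ∀ s ∈ Ici (0 : ℝ),
      HasDerivWithinAt (fun _ => fun _ => 1) ((-L) *ᵥ fun _ : ι => (1 : ℝ)) (Ici 0) s := by
    intro s _
    rw [neg_mulVec, hL.2, neg_zero]
    exact hasDerivWithinAt_const s _ _
  simpa [mulVec, dotProduct] using
    (congrFun (eq_exp_smul_mulVec_of_hasDerivWithinAt hconst ht) i).symm

theorem exp_smul_neg_apply_pos (hL : L.IsLaplacian) (hSC : L.IsStronglyConnectedDigraph)
    {t : ℝ} (ht : 0 < t) (i j : ι) : 0 < exp (t • -L) i j := by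
  refine (hL.isMetzler_smul_neg ht.le).exp_apply_pos ?_
  rcases eq_or_ne i j with rfl | hij
  · exact .refl
  refine (Relation.TransGen.to_reflTransGen ?_)
  rw [← Relation.transGen_swap]
  refine Relation.TransGen.mono (fun a b hab => ?_) _ _ (hSC j i hij.symm)
  simpa [Function.swap] using mul_pos ht (neg_pos.2 hab.2)

theorem exists_osc_le [Nonempty ι] (hL : L.IsLaplacian) (hSC : L.IsStronglyConnectedDigraph) :
    ∃ q, 0 < q ∧ q < 1 ∧ ∀ x : ℝ → ι → ℝ,
      (∀ t ∈ Ici (0 : ℝ), HasDerivWithinAt x ((-L) *ᵥ x t) (Ici 0) t) →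
      ∀ t, 0 ≤ t → osc (x t) ≤ q⁻¹ * Real.exp (Real.log q * t) * osc (x 0) := by
  obtain ⟨q, hq0, hq1, hcontract⟩ := exists_osc_mulVec_le_of_pos
    (hL.exp_smul_neg_apply_pos hSC one_pos) (hL.sum_exp_smul_neg_apply zero_le_one)
  refine ⟨q, hq0, hq1, fun x hx t ht => ?_⟩
  have hflow {s t : ℝ} (hs : 0 ≤ s) (hst : s ≤ t) : x t = exp ((t - s) • -L) *ᵥ x s :=
    eq_exp_sub_smul_mulVec_of_hasDerivWithinAt hx hs hst
  refine le_inv_mul_exp_log_mul_of_antitoneOn (f := fun t => osc (x t)) hq0 hq1.le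
    (fun s hs s' _ hss' => ?_) (fun s hs => ?_) (osc_nonneg _) ht
  · have hlen : 0 ≤ s' - s := sub_nonneg.2 hss'
    simp only [hflow hs hss']
    exact (osc_mulVec_le (hL.isMetzler_smul_neg hlen).exp_apply_nonneg
      (hL.sum_exp_smul_neg_apply hlen) _).trans_eq (one_mul _)
  · simp only [hflow hs (le_add_of_nonneg_right zero_le_one), add_sub_cancel_left]
    exact hcontract _

end Matrix.IsLaplacian

section Consensus

variable {n : ℕ}

theorem distToConsensus_eq_sqrt (y : Fin n → ℝ) :
    distToConsensus y = √(∑ i, (y i - (∑ j, y j) / n) ^ 2) := by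
  simp only [distToConsensus, euclNorm, dotProduct, sq]

theorem abs_sub_avg_le_distToConsensus (y : Fin n → ℝ) (i : Fin n) :
    |y i - (∑ j, y j) / n| ≤ distToConsensus y := by
  rw [distToConsensus_eq_sqrt]
  exact Real.abs_le_sqrt <| single_le_sum (f := fun k => (y k - (∑ j, y j) / n) ^ 2)
    (fun k _ => sq_nonneg _) (mem_univ i)

variable [NeZero n]

theorem avg_mem_Icc (y : Fin n → ℝ) :
    (∑ j, y j) / n ∈ Icc (univ.inf' univ_nonempty y) (univ.sup' univ_nonempty y) := by
  have hn : (0 : ℝ) < n := Nat.cast_pos.2 (Nat.pos_of_neZero n)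
  rw [Set.mem_Icc, le_div_iff₀ hn, div_le_iff₀ hn]
  constructor
  · calc univ.inf' univ_nonempty y * n = ∑ _j : Fin n, univ.inf' univ_nonempty y := by
          simp [mul_comm]
      _ ≤ ∑ j, y j := sum_le_sum fun j _ => inf'_le y (mem_univ j)
  · calc ∑ j, y j ≤ ∑ _j : Fin n, univ.sup' univ_nonempty y :=
          sum_le_sum fun j _ => le_sup' y (mem_univ j)
      _ = univ.sup' univ_nonempty y * n := by simp [mul_comm]

theorem distToConsensus_le_sqrt_mul_osc (y : Fin n → ℝ) :
    distToConsensus y ≤ √n * osc y := by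
  rw [distToConsensus_eq_sqrt, ← Real.sqrt_sq (osc_nonneg y), ← Real.sqrt_mul (Nat.cast_nonneg n)]
  gcongr
  calc ∑ i, (y i - (∑ j, y j) / n) ^ 2 ≤ ∑ _i : Fin n, osc y ^ 2 :=
        sum_le_sum fun i _ => (abs_le.1 (abs_sub_le_osc_of_mem_Icc i (avg_mem_Icc y))).elim sq_le_sq'
    _ = n * osc y ^ 2 := by simp

theorem osc_le_two_mul_distToConsensus (y : Fin n → ℝ) : osc y ≤ 2 * distToConsensus y := by
  obtain ⟨imax, -, hmax⟩ := exists_mem_eq_sup' univ_nonempty y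
  obtain ⟨imin, -, hmin⟩ := exists_mem_eq_inf' univ_nonempty y
  have h₁ := abs_sub_avg_le_distToConsensus y imax
  have h₂ := abs_sub_avg_le_distToConsensus y imin
  rw [osc, hmax, hmin]
  linarith [le_abs_self (y imax - (∑ j, y j) / n), neg_abs_le (y imin - (∑ j, y j) / n)]

end Consensus

/-- For the Laplacian `L` of a strongly connected weighted digraph, the
consensus subspace is globally uniformly exponentially stable for `ẋ = −L x`. -/
theorem statement6 {n : ℕ} (L : Matrix (Fin n) (Fin n) ℝ)
    (hLap : L.IsLaplacian) (hSC : L.IsStronglyConnectedDigraph) :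
    ∃ C ≥ (1:ℝ), ∃ lam > (0:ℝ), ∀ x : ℝ → (Fin n → ℝ),
      (∀ t ∈ Set.Ici (0:ℝ),
        HasDerivWithinAt x (-(L.mulVec (x t))) (Set.Ici 0) t) →
      ∀ t, (0:ℝ) ≤ t →
        distToConsensus (x t) ≤ C * Real.exp (-lam * t) * distToConsensus (x 0) := by
  rcases Nat.eq_zero_or_pos n with rfl | hn
  · exact ⟨1, le_rfl, 1, one_pos, fun x _ t _ => by simp [distToConsensus, euclNorm]⟩
  have : NeZero n := ⟨hn.ne'⟩
  obtain ⟨q, hq0, hq1, hdecay⟩ := hLap.exists_osc_le hSC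
  refine ⟨max 1 (2 * √n / q), le_max_left _ _, -Real.log q, neg_pos.2 (Real.log_neg hq0 hq1),
    fun x hx t ht => ?_⟩
  have hosc := hdecay x (by simpa only [neg_mulVec] using hx) t ht
  calc distToConsensus (x t) ≤ √n * osc (x t) := distToConsensus_le_sqrt_mul_osc _
    _ ≤ √n * (q⁻¹ * Real.exp (Real.log q * t) * (2 * distToConsensus (x 0))) := by
        gcongr
        exact hosc.trans (by gcongr; exact osc_le_two_mul_distToConsensus _)
    _ = 2 * √n / q * Real.exp (-(-Real.log q) * t) * distToConsensus (x 0) := by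
        rw [neg_neg]; ring
    _ ≤ max 1 (2 * √n / q) * Real.exp (-(-Real.log q) * t) * distToConsensus (x 0) := by
        gcongr
        · exact Real.sqrt_nonneg _
        · exact le_max_right _ _
end
end

section
/- Let L ∈ ℝ^{n×n} be the Laplacian matrix of a strongly connected weighted digraph, let v ∈ ℝⁿ be the left eigenvector of L for the eigenvalue 0 with strictly positive entries normalized so vᵀ1ₙ = 1, set V := diag(v) and Q := V L + Lᵀ V. For each i ∈ {1,…,n}, let fᵢ : ℝ → ℝ be continuous and let Vᵢ : ℝ → ℝ≥0 be a C¹ storage function, ρᵢ > 0 a constant, Hᵢ : ℝ → ℝ continuous and ψᵢ : ℝ≥0 → ℝ>0 continuous, satisfying Vᵢ′(s)(fᵢ(s) + u) ≤ 2us − Hᵢ(s) for all s, u ∈ ℝ and Hᵢ(s) ≥ ψᵢ(|s|) for all |s| ≥ ρᵢ. Define W(x) := Σᵢ vᵢ Vᵢ(xᵢ) and H_ℓ := Σᵢ max{vᵢ · max_{|s| ≤ ρᵢ}(−Hᵢ(s)), 0}. Then for every γ > 0 and every x ∈ ℝⁿ, the derivative of W along the vector field x ↦ F(x) − γ L x (where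 F(x)ᵢ = fᵢ(xᵢ)) satisfies Σᵢ vᵢ Vᵢ′(xᵢ)(fᵢ(xᵢ) − γ (L x)ᵢ) ≤ H_ℓ − γ λ₂(Q) · dist(x, 𝒜)², where 𝒜 := span(1ₙ) and λ₂(Q) is the second smallest eigenvalue of Q. -/
/-! Applying the dissipation inequality with `u = -γ (L x)ᵢ`, weighting by `vᵢ > 0` and summing
bounds `Ẇ` by `Σᵢ vᵢ (-Hᵢ(xᵢ)) - γ xᵀ Q x`, since `2 Σᵢ vᵢ xᵢ (L x)ᵢ = xᵀ Q x`. Each `-vᵢ Hᵢ(xᵢ)`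
is at most the `i`-th term of `H_ℓ`: on `[-ρᵢ, ρᵢ]` by the supremum, outside because
`Hᵢ ≥ ψᵢ > 0` there. As `v` is a positive left null vector of `L`, `Q` is symmetric with
nonpositive off-diagonal entries and zero row sums, hence positive semidefinite with `1ₙ` in its
kernel. So `xᵀ Q x = yᵀ Q y` for the centred vector `y ⊥ 1ₙ`, and in an orthonormal eigenbasis
of `Q` at most one eigenvalue lies below `λ₂(Q)`, namely `0`, whose eigenvector `1ₙ` is
orthogonal to `y`; hence `yᵀ Q y ≥ λ₂(Q) ‖y‖²`. -/

open Matrix Filter Set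

noncomputable section

/-- The eigenvalues of `Q` (roots of its characteristic polynomial, counted with
multiplicity) sorted increasingly. -/
def sortedEigenvalues {n : ℕ} (Q : Matrix (Fin n) (Fin n) ℝ) : List ℝ :=
  Q.charpoly.roots.sort (· ≤ ·)

/-- The `k`-th smallest eigenvalue of `Q` (`k = 0` is the smallest, `k = 1` the
second smallest). -/
def eigval {n : ℕ} (Q : Matrix (Fin n) (Fin n) ℝ) (k : ℕ) : ℝ :=
  (sortedEigenvalues Q).getD k 0

theorem List.countP_lt_getD_one_le_one {α : Type*} [LinearOrder α] {m : List α}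
    (hm : m.Pairwise (· ≤ ·)) (d : α) : m.countP (· < m.getD 1 d) ≤ 1 := by
  rcases m with _ | ⟨a, _ | ⟨b, rest⟩⟩
  · simp
  · exact List.countP_le_length.trans (by simp)
  · have hrest : (b :: rest).countP (· < b) = 0 :=
      List.countP_eq_zero.mpr fun c hc => by
        simpa using (List.mem_cons.mp hc).elim (fun h => h ▸ le_rfl)
          (List.rel_of_pairwise_cons (List.pairwise_cons.mp hm).2)
    simp only [List.getD_cons_succ, List.getD_cons_zero, List.countP_cons, hrest]
    split <;> simp

theorem mul_sum_sq_le_sum_mul_sq_of_unique_lt {ι : Type*} [Fintype ι] {σ c d : ι → ℝ} {t : ℝ}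
    (hσ : ∀ k, 0 ≤ σ k) (hσd : ∀ k, σ k * d k = 0) (hd : d ≠ 0) (hcd : ∑ k, c k * d k = 0)
    (ht : ∀ k k', σ k < t → σ k' < t → k = k') :
    t * ∑ k, c k ^ 2 ≤ ∑ k, σ k * c k ^ 2 := by
  have hc : ∀ k, σ k < t → c k = 0 := by
    intro k hk
    have hd_ne : ∀ j ≠ k, d j = 0 := fun j hj =>
      (mul_eq_zero.mp (hσd j)).resolve_left fun h0 =>
        hj (ht j k (h0 ▸ (hσ k).trans_lt hk) hk)
    have hdk : d k ≠ 0 := fun h0 =>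
      hd (funext fun j => by by_cases hj : j = k <;> simp_all)
    rw [Finset.sum_eq_single k (fun j _ hj => by rw [hd_ne j hj, mul_zero]) (by simp)] at hcd
    exact (mul_eq_zero.mp hcd).resolve_right hdk
  rw [Finset.mul_sum]
  refine Finset.sum_le_sum fun k _ => ?_
  rcases lt_or_ge (σ k) t with hk | hk
  · simp [hc k hk]
  · exact mul_le_mul_of_nonneg_right hk (sq_nonneg _)

theorem OrthonormalBasis.dotProduct_eq_sum {ι ι' : Type*} [Fintype ι] [Fintype ι']
    (b : OrthonormalBasis ι' ℝ (EuclideanSpace ℝ ι)) (a c : ι → ℝ) :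
    a ⬝ᵥ c = ∑ k, (⇑(b k) ⬝ᵥ a) * (⇑(b k) ⬝ᵥ c) := by
  simpa [EuclideanSpace.inner_eq_star_dotProduct, dotProduct_comm, mul_comm] using
    (b.sum_inner_mul_inner (WithLp.toLp 2 a) (WithLp.toLp 2 c)).symm

namespace Matrix.IsHermitian

variable {ι : Type*} [Fintype ι] [DecidableEq ι] {Q : Matrix ι ι ℝ} (hQ : Q.IsHermitian)

theorem eigenvectorBasis_dotProduct_mulVec (k : ι) (w : ι → ℝ) :
    ⇑(hQ.eigenvectorBasis k) ⬝ᵥ Q *ᵥ w = hQ.eigenvalues k * (⇑(hQ.eigenvectorBasis k) ⬝ᵥ w) := by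
  rw [dotProduct_mulVec, ← mulVec_transpose, ← conjTranspose_eq_transpose_of_trivial, hQ.eq,
    mulVec_eigenvectorBasis, smul_dotProduct, smul_eq_mul]

theorem dotProduct_mulVec_eq_sum_eigenvalues (w : ι → ℝ) :
    w ⬝ᵥ Q *ᵥ w = ∑ k, hQ.eigenvalues k * (⇑(hQ.eigenvectorBasis k) ⬝ᵥ w) ^ 2 := by
  rw [hQ.eigenvectorBasis.dotProduct_eq_sum]
  refine Finset.sum_congr rfl fun k _ => ?_
  rw [hQ.eigenvectorBasis_dotProduct_mulVec]
  ring

end Matrix.IsHermitian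

theorem Matrix.IsHermitian.card_eigenvalues_lt_eigval_one_le_one {n : ℕ}
    {Q : Matrix (Fin n) (Fin n) ℝ} (hQ : Q.IsHermitian) :
    (Finset.univ.filter fun k => hQ.eigenvalues k < eigval Q 1).card ≤ 1 := by
  have hroots : Q.charpoly.roots = Finset.univ.val.map hQ.eigenvalues := by
    simp [hQ.roots_charpoly_eq_eigenvalues, RCLike.ofReal_real_eq_id]
  calc (Finset.univ.filter fun k => hQ.eigenvalues k < eigval Q 1).card
      = Q.charpoly.roots.countP (· < eigval Q 1) := by
        rw [hroots, Multiset.countP_map]; rfl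
    _ = (sortedEigenvalues Q).countP (· < eigval Q 1) := by
        rw [sortedEigenvalues, ← Multiset.coe_countP, Multiset.sort_eq]
    _ ≤ 1 := List.countP_lt_getD_one_le_one (Multiset.pairwise_sort _ _) 0

theorem Matrix.PosSemidef.eigval_one_mul_dotProduct_le {n : ℕ} {Q : Matrix (Fin n) (Fin n) ℝ}
    (hQ : Q.PosSemidef) {o y : Fin n → ℝ} (ho : Q *ᵥ o = 0) (ho0 : o ≠ 0) (hyo : y ⬝ᵥ o = 0) :
    eigval Q 1 * (y ⬝ᵥ y) ≤ y ⬝ᵥ Q *ᵥ y := by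
  set b := hQ.1.eigenvectorBasis
  rw [b.dotProduct_eq_sum y y, hQ.1.dotProduct_mulVec_eq_sum_eigenvalues]
  simp_rw [← sq]
  refine mul_sum_sq_le_sum_mul_sq_of_unique_lt (d := fun k => ⇑(b k) ⬝ᵥ o) hQ.eigenvalues_nonneg
    (fun k => ?_) (fun hd => ho0 ?_) (by rw [← b.dotProduct_eq_sum, hyo]) (fun k k' hk hk' => ?_)
  · rw [← hQ.1.eigenvectorBasis_dotProduct_mulVec, ho, dotProduct_zero]
  · rw [← dotProduct_self_eq_zero, b.dotProduct_eq_sum]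
    simp [funext_iff.mp hd]
  · exact Finset.card_le_one.mp hQ.1.card_eigenvalues_lt_eigval_one_le_one k (by simpa using hk)
      k' (by simpa using hk')

theorem Matrix.dotProduct_mulVec_eq_neg_half_sum {ι : Type*} [Fintype ι] {Q : Matrix ι ι ℝ}
    (hQ : Qᵀ = Q) (h1 : Q *ᵥ 1 = 0) (w : ι → ℝ) :
    w ⬝ᵥ Q *ᵥ w = -(∑ i, ∑ j, Q i j * (w i - w j) ^ 2) / 2 := by
  have hrow : ∀ i, ∑ j, Q i j = 0 := fun i => by simpa [mulVec, dotProduct] using congrFun h1 i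
  have hcol : ∀ j, ∑ i, Q i j = 0 := fun j => by
    rw [← hrow j]
    exact Finset.sum_congr rfl fun i _ => congrFun (congrFun hQ j) i
  have expand : ∑ i, ∑ j, Q i j * (w i - w j) ^ 2 =
      (∑ i, (∑ j, Q i j) * w i ^ 2) + (∑ j, (∑ i, Q i j) * w j ^ 2) - 2 * (w ⬝ᵥ Q *ᵥ w) := by
    simp only [dotProduct, mulVec, Finset.sum_mul, Finset.mul_sum]
    rw [Finset.sum_comm (f := fun j i => Q i j * w j ^ 2), ← Finset.sum_add_distrib,
      ← Finset.sum_sub_distrib]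
    refine Finset.sum_congr rfl fun i _ => ?_
    rw [← Finset.sum_add_distrib, ← Finset.sum_sub_distrib]
    exact Finset.sum_congr rfl fun j _ => by ring
  simp [expand, hrow, hcol]

theorem Matrix.posSemidef_of_mulVec_one_eq_zero {ι : Type*} [Fintype ι] {Q : Matrix ι ι ℝ}
    (hQ : Qᵀ = Q) (hoff : ∀ i j, i ≠ j → Q i j ≤ 0) (h1 : Q *ᵥ 1 = 0) : Q.PosSemidef := by
  refine .of_dotProduct_mulVec_nonneg
    (by rwa [IsHermitian, conjTranspose_eq_transpose_of_trivial]) fun w => ?_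
  rw [star_trivial, dotProduct_mulVec_eq_neg_half_sum hQ h1, neg_div, neg_nonneg]
  refine div_nonpos_of_nonpos_of_nonneg
    (Finset.sum_nonpos fun i _ => Finset.sum_nonpos fun j _ => ?_) zero_le_two
  rcases eq_or_ne i j with rfl | hij
  · simp
  · exact mul_nonpos_of_nonpos_of_nonneg (hoff i j hij) (sq_nonneg _)

section WeightedLaplacian

variable {ι : Type*} [Fintype ι] [DecidableEq ι]

theorem Matrix.transpose_diagonal_mul_add_transpose_mul (L : Matrix ι ι ℝ) (v : ι → ℝ) :
    (diagonal v * L + Lᵀ * diagonal v)ᵀ = diagonal v * L + Lᵀ * diagonal v := by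
  rw [transpose_add, transpose_mul, transpose_mul, diagonal_transpose, transpose_transpose,
    add_comm]

theorem Matrix.diagonal_mul_add_transpose_mul_mulVec_one {L : Matrix ι ι ℝ} {v : ι → ℝ}
    (hL : L *ᵥ 1 = 0) (hvL : v ᵥ* L = 0) : (diagonal v * L + Lᵀ * diagonal v) *ᵥ 1 = 0 := by
  have hv1 : diagonal v *ᵥ 1 = v := by ext i; simp [mulVec_diagonal]
  rw [add_mulVec, ← mulVec_mulVec, ← mulVec_mulVec, hL, mulVec_zero, hv1, mulVec_transpose, hvL,
    add_zero]

theorem Matrix.IsLaplacian.posSemidef_diagonal_mul_add_transpose_mul {L : Matrix ι ι ℝ}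
    (hL : L.IsLaplacian) {v : ι → ℝ} (hv : ∀ i, 0 ≤ v i) (hvL : v ᵥ* L = 0) :
    (diagonal v * L + Lᵀ * diagonal v).PosSemidef := by
  refine posSemidef_of_mulVec_one_eq_zero (transpose_diagonal_mul_add_transpose_mul L v)
    (fun i j hij => ?_) (diagonal_mul_add_transpose_mul_mulVec_one hL.2 hvL)
  simp only [add_apply, diagonal_mul, mul_diagonal, transpose_apply]
  nlinarith [mul_nonpos_of_nonneg_of_nonpos (hv i) (hL.1 i j hij),
    mul_nonpos_of_nonpos_of_nonneg (hL.1 j i hij.symm) (hv j)]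

theorem Matrix.dotProduct_mulVec_diagonal_mul_add_transpose_mul (L : Matrix ι ι ℝ)
    (v x : ι → ℝ) :
    x ⬝ᵥ (diagonal v * L + Lᵀ * diagonal v) *ᵥ x = 2 * ∑ i, v i * x i * (L *ᵥ x) i := by
  rw [add_mulVec, dotProduct_add, ← mulVec_mulVec, ← mulVec_mulVec, dotProduct_mulVec x Lᵀ,
    vecMul_transpose, dotProduct_comm (L *ᵥ x)]
  simp only [dotProduct, mulVec_diagonal, Finset.mul_sum]
  rw [← Finset.sum_add_distrib]
  exact Finset.sum_congr rfl fun i _ => by ring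

end WeightedLaplacian

theorem Matrix.dotProduct_mulVec_sub_smul {ι : Type*} [Fintype ι] {Q : Matrix ι ι ℝ}
    (hQ : Qᵀ = Q) {o : ι → ℝ} (ho : Q *ᵥ o = 0) (x : ι → ℝ) (c : ℝ) :
    (x - c • o) ⬝ᵥ Q *ᵥ (x - c • o) = x ⬝ᵥ Q *ᵥ x := by
  have hoQ : o ᵥ* Q = 0 := by rw [← mulVec_transpose, hQ, ho]
  rw [mulVec_sub, mulVec_smul, ho, smul_zero, sub_zero, sub_dotProduct, smul_dotProduct,
    dotProduct_mulVec o, hoQ, zero_dotProduct, smul_zero, sub_zero]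

theorem sub_mean_dotProduct_one {n : ℕ} (x : Fin n → ℝ) :
    (fun i => x i - (∑ j, x j) / n) ⬝ᵥ 1 = 0 := by
  rcases Nat.eq_zero_or_pos n with rfl | hn
  · simp
  · have hn' : (n : ℝ) ≠ 0 := by positivity
    simp [dotProduct, Finset.sum_sub_distrib, mul_div_cancel₀ _ hn']

theorem mul_neg_le_max_mul_sSup_neg_image_Icc {H : ℝ → ℝ} (hH : Continuous H) {ρ w : ℝ}
    (hw : 0 ≤ w) (hout : ∀ s, ρ ≤ |s| → 0 ≤ H s) (s : ℝ) :
    w * -H s ≤ max (w * sSup ((fun s => -H s) '' Icc (-ρ) ρ)) 0 := by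
  rcases le_or_gt |s| ρ with hs | hs
  · exact le_max_of_le_left <| mul_le_mul_of_nonneg_left
      (le_csSup (isCompact_Icc.bddAbove_image hH.neg.continuousOn) ⟨s, abs_le.mp hs, rfl⟩) hw
  · exact le_max_of_le_right <|
      mul_nonpos_of_nonneg_of_nonpos hw (neg_nonpos.mpr (hout s hs.le))

theorem statement10_general {n : ℕ} (L : Matrix (Fin n) (Fin n) ℝ)
    (hLap : L.IsLaplacian)
    (v : Fin n → ℝ) (hv_pos : ∀ i, 0 < v i)
    (hv_left : Matrix.vecMul v L = 0)
    (f : Fin n → ℝ → ℝ) (V' : Fin n → ℝ → ℝ) (ρ : Fin n → ℝ)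
    (H : Fin n → ℝ → ℝ) (hH : ∀ i, Continuous (H i))
    (ψ : Fin n → ℝ → ℝ) (hψ_pos : ∀ i s, 0 ≤ s → 0 < ψ i s)
    (hdiss : ∀ i s u, V' i s * (f i s + u) ≤ 2 * u * s - H i s)
    (hHψ : ∀ i s, ρ i ≤ |s| → ψ i |s| ≤ H i s) :
    ∀ γ > (0:ℝ), ∀ x : Fin n → ℝ,
      ∑ i, v i * (V' i (x i) * (f i (x i) - γ * L.mulVec x i)) ≤
        (∑ i, max (v i * sSup ((fun s => -H i s) '' Set.Icc (-(ρ i)) (ρ i))) 0) -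
          γ * eigval (Matrix.diagonal v * L + Lᵀ * Matrix.diagonal v) 1 *
            euclNorm (fun i => x i - (∑ j, x j) / n) ^ 2 := by
  intro γ hγ x
  set Q := diagonal v * L + Lᵀ * diagonal v
  set y : Fin n → ℝ := fun i => x i - (∑ j, x j) / n
  have hQ : Q.PosSemidef :=
    hLap.posSemidef_diagonal_mul_add_transpose_mul (fun i => (hv_pos i).le) hv_left
  have hQ1 : Q *ᵥ 1 = 0 := diagonal_mul_add_transpose_mul_mulVec_one hLap.2 hv_left
  have hgap : eigval Q 1 * euclNorm y ^ 2 ≤ x ⬝ᵥ Q *ᵥ x := by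
    have hy : y = x - ((∑ j, x j) / n) • 1 := by ext i; simp [y]
    rw [euclNorm, Real.sq_sqrt (by simpa using dotProduct_star_self_nonneg y),
      ← dotProduct_mulVec_sub_smul (transpose_diagonal_mul_add_transpose_mul L v) hQ1 x, ← hy]
    rcases Nat.eq_zero_or_pos n with rfl | hn
    · simp
    · exact hQ.eigval_one_mul_dotProduct_le hQ1 (fun h => by simpa using congrFun h ⟨0, hn⟩)
        (sub_mean_dotProduct_one x)
  have hnode : ∀ i, v i * (V' i (x i) * (f i (x i) - γ * (L *ᵥ x) i)) ≤
      v i * -H i (x i) - γ * (2 * (v i * x i * (L *ᵥ x) i)) := fun i => by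
    linarith [mul_le_mul_of_nonneg_left (hdiss i (x i) (-(γ * (L *ᵥ x) i))) (hv_pos i).le]
  have hH_out : ∀ i s, ρ i ≤ |s| → 0 ≤ H i s := fun i s hs =>
    (hψ_pos i |s| (abs_nonneg s)).le.trans (hHψ i s hs)
  calc ∑ i, v i * (V' i (x i) * (f i (x i) - γ * (L *ᵥ x) i))
      ≤ ∑ i, (v i * -H i (x i) - γ * (2 * (v i * x i * (L *ᵥ x) i))) :=
        Finset.sum_le_sum fun i _ => hnode i
    _ = ∑ i, v i * -H i (x i) - γ * (x ⬝ᵥ Q *ᵥ x) := by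
      rw [Finset.sum_sub_distrib, ← Finset.mul_sum, ← Finset.mul_sum,
        dotProduct_mulVec_diagonal_mul_add_transpose_mul]
    _ ≤ _ := by
      rw [mul_assoc]
      gcongr with i
      exact mul_neg_le_max_mul_sSup_neg_image_Icc (hH i) (hv_pos i).le (hH_out i) (x i)

/-- Derivative bound for the Lyapunov function `W(x) = Σᵢ vᵢ Vᵢ(xᵢ)` of the
leading component along `ẋ = F(x) − γ L x`:
`Ẇ(x) ≤ H_ℓ − γ λ₂(Q) dist(x, 𝒜)²` where `Q := diag(v) L + Lᵀ diag(v)` and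
`H_ℓ := Σᵢ max{vᵢ · max_{|s| ≤ ρᵢ}(−Hᵢ(s)), 0}`. -/
theorem statement10 {n : ℕ} (L : Matrix (Fin n) (Fin n) ℝ)
    (hLap : L.IsLaplacian) (hSC : L.IsStronglyConnectedDigraph)
    (v : Fin n → ℝ) (hv_pos : ∀ i, 0 < v i)
    (hv_left : Matrix.vecMul v L = 0)
    (hv_norm : v ⬝ᵥ (fun _ => 1) = 1)
    (f : Fin n → ℝ → ℝ) (hf : ∀ i, Continuous (f i))
    (V : Fin n → ℝ → ℝ) (V' : Fin n → ℝ → ℝ)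
    (hV_nonneg : ∀ i s, 0 ≤ V i s)
    (hV_deriv : ∀ i s, HasDerivAt (V i) (V' i s) s)
    (hV'_cont : ∀ i, Continuous (V' i))
    (ρ : Fin n → ℝ) (hρ : ∀ i, 0 < ρ i)
    (H : Fin n → ℝ → ℝ) (hH : ∀ i, Continuous (H i))
    (ψ : Fin n → ℝ → ℝ) (hψ_cont : ∀ i, Continuous (ψ i))
    (hψ_pos : ∀ i s, 0 ≤ s → 0 < ψ i s)
    (hdiss : ∀ i s u, V' i s * (f i s + u) ≤ 2 * u * s - H i s)
    (hHψ : ∀ i s, ρ i ≤ |s| → ψ i |s| ≤ H i s) :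
    ∀ γ > (0:ℝ), ∀ x : Fin n → ℝ,
      ∑ i, v i * (V' i (x i) * (f i (x i) - γ * L.mulVec x i)) ≤
        (∑ i, max (v i * sSup ((fun s => -H i s) '' Set.Icc (-(ρ i)) (ρ i))) 0) -
          γ * eigval (Matrix.diagonal v * L + Lᵀ * Matrix.diagonal v) 1 *
            euclNorm (fun i => x i - (∑ j, x j) / n) ^ 2 :=
  statement10_general L hLap v hv_pos hv_left f V' ρ H hH ψ hψ_pos hdiss hHψ
end
end

section
/- Let L ∈ ℝ^{n×n} be the Laplacian matrix of a weighted digraph that is connected and contains a directed spanning tree (i.e., there exists a node from which every other node is reachable by a directed path). Then there exists a permutation matrix P and integers n_ℓ ≥ 1, n_f ≥ 0 with n_ℓ + n_f = n such that P L Pᵀ = [[L_ℓ, 0], [−A, M]], where L_ℓ ∈ ℝ^{n_ℓ×n_ℓ} is the Laplacian matrix of a strongly connected weighted digraph, A ∈ ℝ^{n_f×n_ℓ} is entrywise nonnegative, and M ∈ ℝ^{n_f×n_f} is a nonsingular M-matrix. -/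
/-! The leaders are the nodes from which the root can be reached. They form the strongly
connected class of the root, and no edge enters them from the followers: this is the zero
block. For the follower block `M`, take an eigenvector of an eigenvalue with `re ≤ 0` and an
entry of maximal modulus. By Gershgorin's estimate the maximum spreads backwards along the
edges of the follower graph, up to a follower with an incoming edge from a leader (every follower
is reached from the root); that row of `M` has positive sum, which forces the entry to vanish. -/

open Matrix Filter Set

noncomputable section

open Finset Relation Sum

theorem Relation.ReflTransGen.digraphEdge_reindex {ι κ : Type*} {L : Matrix ι ι ℝ}
    (e : ι ≃ κ) {a b : ι} (h : ReflTransGen L.digraphEdge a b) :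
    ReflTransGen (reindex e e L).digraphEdge (e a) (e b) :=
  h.lift e fun a b hab => by simpa [digraphEdge] using hab

namespace Matrix

variable {ι : Type*} [Fintype ι]

theorem isLaplacian_iff {L : Matrix ι ι ℝ} :
    L.IsLaplacian ↔ (∀ i j, i ≠ j → L i j ≤ 0) ∧ ∀ i, ∑ j, L i j = 0 := by
  simp [IsLaplacian, funext_iff, mulVec, dotProduct]

theorem IsLaplacian.reindex {κ : Type*} [Fintype κ] {L : Matrix ι ι ℝ} (hL : L.IsLaplacian)
    (e : ι ≃ κ) : (reindex e e L).IsLaplacian := by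
  rw [isLaplacian_iff] at hL ⊢
  refine ⟨fun u v huv => hL.1 _ _ (e.symm.injective.ne huv), fun u => ?_⟩
  simpa using (e.symm.sum_comp (L (e.symm u))).trans (hL.2 _)

section MMatrix

variable [DecidableEq ι]

theorem exists_mulVec_eq_smul_of_mem_roots_charpoly {K : Type*} [Field K] {A : Matrix ι ι K}
    {μ : K} (hμ : μ ∈ A.charpoly.roots) : ∃ x ≠ 0, A *ᵥ x = μ • x := by
  have : Module.End.HasEigenvalue A.toLin' μ := by
    rw [Module.End.hasEigenvalue_iff_isRoot_charpoly, charpoly_toLin']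
    exact Polynomial.isRoot_of_mem_roots hμ
  obtain ⟨x, hx⟩ := this.exists_hasEigenvector
  exact ⟨x, hx.2, by simpa using hx.apply_eq_smul⟩

variable {M : Matrix ι ι ℝ} {μ : ℂ} {x : ι → ℂ}

/-- Gershgorin's estimate at row `i`, arranged so that both summands are nonnegative when
`‖x i‖` is maximal and the row sum is nonnegative. -/
theorem sum_mul_norm_add_sum_erase_le_zero (hoff : ∀ i j, i ≠ j → M i j ≤ 0) (hμ : μ.re ≤ 0)
    (hx : M.map (↑) *ᵥ x = μ • x) (i : ι) :
    (∑ j, M i j) * ‖x i‖ + ∑ j ∈ univ.erase i, -M i j * (‖x i‖ - ‖x j‖) ≤ 0 := by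
  have hrow : (M i i - μ) * x i = -∑ j ∈ univ.erase i, M i j * x j := by
    have := congrFun hx i
    simp only [mulVec, dotProduct, map_apply, Pi.smul_apply, smul_eq_mul] at this
    rw [← add_sum_erase _ _ (mem_univ i)] at this
    linear_combination this
  have hdiag : M i i * ‖x i‖ ≤ ∑ j ∈ univ.erase i, -M i j * ‖x j‖ :=
    calc M i i * ‖x i‖ ≤ ‖(M i i - μ : ℂ)‖ * ‖x i‖ := by
          gcongr
          calc M i i ≤ (M i i - μ : ℂ).re := by simp [hμ]
            _ ≤ _ := Complex.re_le_norm _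
      _ = ‖∑ j ∈ univ.erase i, M i j * x j‖ := by rw [← norm_mul, hrow, norm_neg]
      _ ≤ ∑ j ∈ univ.erase i, ‖(M i j : ℂ) * x j‖ := norm_sum_le _ _
      _ = ∑ j ∈ univ.erase i, -M i j * ‖x j‖ := by
          refine sum_congr rfl fun j hj => ?_
          rw [norm_mul, Complex.norm_real,
            Real.norm_of_nonpos (hoff i j (ne_of_mem_erase hj).symm)]
  have hsplit := add_sum_erase univ (M i) (mem_univ i)
  simp only [mul_sub, sum_sub_distrib, ← sum_mul, sum_neg_distrib] at hdiag ⊢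
  rw [← hsplit]
  linarith

theorem eq_zero_of_isMax_norm_of_sum_pos (hoff : ∀ i j, i ≠ j → M i j ≤ 0) (hμ : μ.re ≤ 0)
    (hx : M.map (↑) *ᵥ x = μ • x) {i : ι} (hmax : ∀ j, ‖x j‖ ≤ ‖x i‖)
    (hpos : 0 < ∑ j, M i j) : x i = 0 := by
  have hsum := sum_mul_norm_add_sum_erase_le_zero hoff hμ hx i
  have : 0 ≤ ∑ j ∈ univ.erase i, -M i j * (‖x i‖ - ‖x j‖) := sum_nonneg fun j hj =>
    mul_nonneg (neg_nonneg.2 (hoff i j (ne_of_mem_erase hj).symm)) (sub_nonneg.2 (hmax j))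
  exact norm_le_zero_iff.1 (nonpos_of_mul_nonpos_right (by linarith) hpos)

theorem norm_eq_of_isMax_norm_of_digraphEdge (hoff : ∀ i j, i ≠ j → M i j ≤ 0)
    (hrow : ∀ i, 0 ≤ ∑ j, M i j) (hμ : μ.re ≤ 0) (hx : M.map (↑) *ᵥ x = μ • x) {i j : ι}
    (hmax : ∀ j, ‖x j‖ ≤ ‖x i‖) (hji : M.digraphEdge j i) : ‖x j‖ = ‖x i‖ := by
  have hsum := sum_mul_norm_add_sum_erase_le_zero hoff hμ hx i
  have hterm : -M i j * (‖x i‖ - ‖x j‖) ≤ ∑ k ∈ univ.erase i, -M i k * (‖x i‖ - ‖x k‖) :=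
    single_le_sum (fun k hk => mul_nonneg (neg_nonneg.2 (hoff i k (ne_of_mem_erase hk).symm))
      (sub_nonneg.2 (hmax k))) (mem_erase.2 ⟨hji.1, mem_univ j⟩)
  have := mul_nonneg (hrow i) (norm_nonneg (x i))
  have : ‖x i‖ - ‖x j‖ ≤ 0 := nonpos_of_mul_nonpos_right (by linarith) (neg_pos.2 hji.2)
  linarith [hmax j]

theorem isNonsingularMMatrix_of_reachable (hoff : ∀ i j, i ≠ j → M i j ≤ 0)
    (hrow : ∀ i, 0 ≤ ∑ j, M i j)
    (hreach : ∀ i, ∃ k, 0 < ∑ j, M k j ∧ ReflTransGen M.digraphEdge k i) :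
    M.IsNonsingularMMatrix := by
  refine ⟨hoff, fun μ hμ => ?_⟩
  by_contra! hre
  obtain ⟨x, hx0, hx⟩ := exists_mulVec_eq_smul_of_mem_roots_charpoly hμ
  obtain ⟨j₀, hj₀⟩ := Function.ne_iff.1 hx0
  obtain ⟨i, -, hi⟩ := exists_max_image univ (fun j => ‖x j‖) ⟨j₀, mem_univ j₀⟩
  have hmax : ∀ j, ‖x j‖ ≤ ‖x i‖ := fun j => hi j (mem_univ j)
  have hspread (a : ι) (h : ReflTransGen M.digraphEdge a i) : ‖x a‖ = ‖x i‖ := by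
    induction h using ReflTransGen.head_induction_on with
    | refl => rfl
    | head hab _ ih =>
      exact (norm_eq_of_isMax_norm_of_digraphEdge hoff hrow hre hx (ih ▸ hmax) hab).trans ih
  obtain ⟨k, hpos, hpath⟩ := hreach i
  have hk := hspread k hpath
  have := eq_zero_of_isMax_norm_of_sum_pos hoff hre hx (hk ▸ hmax) hpos
  exact hj₀ (norm_le_zero_iff.1 (by simpa [this, ← hk] using hmax j₀))

end MMatrix

section Blocks

variable {κ κ' : Type*} {B : Matrix (κ ⊕ κ') (κ ⊕ κ') ℝ}

theorem exists_eq_inl_reflTransGen_toBlocks₁₁ (h12 : B.toBlocks₁₂ = 0) {u : κ ⊕ κ'} {j : κ}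
    (h : ReflTransGen B.digraphEdge u (inl j)) :
    ∃ i, u = inl i ∧ ReflTransGen B.toBlocks₁₁.digraphEdge i j := by
  induction h using ReflTransGen.head_induction_on with
  | refl => exact ⟨j, rfl, .refl⟩
  | @head u w huw _ ih =>
    obtain ⟨i', rfl, hpath⟩ := ih
    rcases huw with ⟨hne, hlt⟩
    cases u with
    | inl i => exact ⟨i, rfl, .head ⟨ne_of_apply_ne inl hne, hlt⟩ hpath⟩
    | inr k => exact absurd (congrFun₂ h12 i' k) hlt.ne

theorem isStronglyConnectedDigraph_toBlocks₁₁ (h12 : B.toBlocks₁₂ = 0) {ρ : κ}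
    (hroot : ∀ u, ReflTransGen B.digraphEdge (inl ρ) u)
    (hleader : ∀ i, ReflTransGen B.digraphEdge (inl i) (inl ρ)) :
    B.toBlocks₁₁.IsStronglyConnectedDigraph := by
  intro i j hij
  obtain ⟨i', hi', hpath⟩ :=
    exists_eq_inl_reflTransGen_toBlocks₁₁ h12 ((hleader i).trans (hroot (inl j)))
  cases inl_injective hi'
  exact (reflTransGen_iff_eq_or_transGen.1 hpath).resolve_left hij.symm

variable [Fintype κ] [Fintype κ']

theorem IsLaplacian.toBlocks₁₁ (hB : B.IsLaplacian) (h12 : B.toBlocks₁₂ = 0) :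
    B.toBlocks₁₁.IsLaplacian := by
  rw [isLaplacian_iff] at hB ⊢
  refine ⟨fun i j hij => hB.1 _ _ (inl_injective.ne hij), fun i => ?_⟩
  have := hB.2 (inl i)
  rw [Fintype.sum_sum_type] at this
  show ∑ j, B (inl i) (inl j) = 0
  simpa [show ∀ j, B (inl i) (inr j) = 0 from congrFun₂ h12 i] using this

theorem IsLaplacian.sum_toBlocks₂₂ (hB : B.IsLaplacian) (j : κ') :
    ∑ k, B.toBlocks₂₂ j k = -∑ i, B.toBlocks₂₁ j i := by
  have := (isLaplacian_iff.1 hB).2 (inr j)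
  rw [Fintype.sum_sum_type] at this
  simp only [toBlocks₂₁, toBlocks₂₂, of_apply]
  linarith

theorem IsLaplacian.toBlocks₂₁_nonpos (hB : B.IsLaplacian) (j : κ') (i : κ) :
    B.toBlocks₂₁ j i ≤ 0 :=
  hB.1 _ _ inr_ne_inl

theorem IsLaplacian.exists_sum_pos_reflTransGen_toBlocks₂₂ (hB : B.IsLaplacian) {i : κ}
    {j : κ'} (h : ReflTransGen B.digraphEdge (inl i) (inr j)) :
    ∃ k, 0 < ∑ l, B.toBlocks₂₂ k l ∧ ReflTransGen B.toBlocks₂₂.digraphEdge k j := by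
  generalize hj : (inr j : κ ⊕ κ') = u at h
  induction h generalizing j with
  | refl => exact absurd hj inr_ne_inl
  | @tail w u _ hwu ih =>
    subst hj
    rcases hwu with ⟨hne, hlt⟩
    cases w with
    | inl i' =>
      refine ⟨j, ?_, .refl⟩
      rw [hB.sum_toBlocks₂₂, neg_pos]
      exact sum_neg' (fun i _ => hB.toBlocks₂₁_nonpos j i) ⟨i', mem_univ _, hlt⟩
    | inr j' =>
      obtain ⟨k, hk, hpath⟩ := ih rfl
      exact ⟨k, hk, hpath.tail ⟨ne_of_apply_ne inr hne, hlt⟩⟩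

theorem IsLaplacian.isNonsingularMMatrix_toBlocks₂₂ [DecidableEq κ'] (hB : B.IsLaplacian)
    (hreach : ∀ j, ∃ i, ReflTransGen B.digraphEdge (inl i) (inr j)) :
    B.toBlocks₂₂.IsNonsingularMMatrix := by
  refine isNonsingularMMatrix_of_reachable (fun i j hij => hB.1 _ _ (inr_injective.ne hij))
    (fun j => ?_) (fun j => ?_)
  · rw [hB.sum_toBlocks₂₂, neg_nonneg]
    exact sum_nonpos fun i _ => hB.toBlocks₂₁_nonpos j i
  · obtain ⟨i, hi⟩ := hreach j
    exact hB.exists_sum_pos_reflTransGen_toBlocks₂₂ hi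

end Blocks

end Matrix

theorem Fintype.exists_equiv_fin_sum_fin {α : Type*} [Fintype α] (p : α → Prop)
    [DecidablePred p] :
    ∃ (k l : ℕ) (e : α ≃ Fin k ⊕ Fin l), k + l = Fintype.card α ∧
      (∀ i, p (e.symm (inl i))) ∧ ∀ j, ¬p (e.symm (inr j)) :=
  ⟨_, _, (Equiv.sumCompl p).symm.trans ((Fintype.equivFin _).sumCongr (Fintype.equivFin _)),
    (Fintype.card_sum ..).symm.trans (Fintype.card_congr (Equiv.sumCompl p)),
    fun i => by simpa using ((Fintype.equivFin _).symm i).2,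
    fun j => by simpa using ((Fintype.equivFin _).symm j).2⟩

/-- If the weighted digraph of the Laplacian `L` contains a directed
spanning tree (some node reaches every other node by a directed path), then after a
relabeling of the nodes (a permutation, encoded by the equivalence `e`), `L` takes the
block lower-triangular form `[[Lℓ, 0], [−A, M]]` with `Lℓ` the Laplacian of a strongly
connected weighted digraph, `A ≥ 0` entrywise, and `M` a nonsingular M-matrix. -/
theorem statement12 {n : ℕ} (L : Matrix (Fin n) (Fin n) ℝ)
    (hLap : L.IsLaplacian)
    (hTree : ∃ root : Fin n, ∀ j : Fin n, j ≠ root →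
      Relation.TransGen L.digraphEdge root j) :
    ∃ (nl nf : ℕ), 1 ≤ nl ∧ nl + nf = n ∧
      ∃ (e : Fin n ≃ (Fin nl ⊕ Fin nf))
        (Lℓ : Matrix (Fin nl) (Fin nl) ℝ)
        (A : Matrix (Fin nf) (Fin nl) ℝ)
        (M : Matrix (Fin nf) (Fin nf) ℝ),
        Matrix.reindex e e L = Matrix.fromBlocks Lℓ 0 (-A) M ∧
        Lℓ.IsLaplacian ∧ Lℓ.IsStronglyConnectedDigraph ∧
        (∀ i j, 0 ≤ A i j) ∧ M.IsNonsingularMMatrix := by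
  classical
  obtain ⟨r, hr⟩ := hTree
  have hreach (a : Fin n) : ReflTransGen L.digraphEdge r a := by
    by_cases h : a = r
    · exact h ▸ .refl
    · exact (hr a h).to_reflTransGen
  obtain ⟨nl, nf, e, hcard, hleader, hfollower⟩ :=
    Fintype.exists_equiv_fin_sum_fin (ReflTransGen L.digraphEdge · r)
  obtain ⟨ρ, hρ⟩ : ∃ ρ, e r = inl ρ := by
    rcases h : e r with ρ | j
    · exact ⟨ρ, rfl⟩
    · exact absurd (by rw [e.symm_apply_eq.2 h.symm]) (hfollower j)
  set B := reindex e e L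
  have hB : B.IsLaplacian := hLap.reindex e
  have h12 : B.toBlocks₁₂ = 0 := by
    ext i j
    refine (hLap.1 _ _ (by simp)).antisymm (not_lt.1 fun hlt => hfollower j ?_)
    exact .head ⟨by simp, hlt⟩ (hleader i)
  refine ⟨nl, nf, ρ.pos, by simpa using hcard, e, B.toBlocks₁₁, -B.toBlocks₂₁, B.toBlocks₂₂,
    by rw [neg_neg, ← h12, fromBlocks_toBlocks], hB.toBlocks₁₁ h12,
    isStronglyConnectedDigraph_toBlocks₁₁ h12 (ρ := ρ) (fun u => ?_) (fun i => ?_),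
    fun i j => neg_nonneg.2 (hB.toBlocks₂₁_nonpos i j),
    hB.isNonsingularMMatrix_toBlocks₂₂ fun j => ⟨ρ, ?_⟩⟩
  · simpa only [hρ, Equiv.apply_symm_apply] using (hreach (e.symm u)).digraphEdge_reindex e
  · simpa only [hρ, Equiv.apply_symm_apply] using (hleader i).digraphEdge_reindex e
  · simpa only [hρ, Equiv.apply_symm_apply] using (hreach (e.symm (inr j))).digraphEdge_reindex e
end
end
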